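/- arXiv:2503.01721 — 10 statements merged into one kernel-verified Lean document; each statement's English description precedes it below -/
import Mathlib

section
/- Let F be a field, V a finite-dimensional F-vector space and q : V → F a non-degenerate isotropic quadratic form. Then the diameter of the representation graph G_{q,0} equals 2; in particular G_{q,0} is connected. -/
open QuadraticMap Module

/-- The representation graph `G_{q,a}`: vertices are the vectors of `V`, and distinct
`x, y` are adjacent iff `q (x - y) = a`. -/
def repGraph {F V : Type*} [Field F] [AddCommGroup V] [Module F V]
    (q : QuadraticForm F V) (a : F) : SimpleGraph V where
  Adj x y := x ≠ y ∧ q (x - y) = a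
  symm := by
    constructor
    rintro x y ⟨hxy, h⟩
    refine ⟨hxy.symm, ?_⟩
    rw [← neg_sub x y, QuadraticMap.map_neg]
    exact h
  loopless := by constructor; rintro x ⟨h, -⟩; exact h rfl

/-!
Let `B` be the polar form of `q` and `v ≠ 0` isotropic. If `B x v ≠ 0`, then `x + c • v` is
isotropic for `c = -q x / B x v`, so `x` lies in the span of the isotropic vectors; choosing `u`
with `B u v ≠ 0` and writing `x = (x + u) - u` shows that this span is all of `V`. Hence for
`w ≠ 0` some isotropic `t` has `B t w ≠ 0`, and a multiple `s` of `t` makes `w - s` isotropic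
too. Taking `w = x - y` with `q w ≠ 0`, the vertex `y + s` is a common neighbour of `x` and `y`,
so all distances are at most `2`; the distance from `0` to any `w` with `q w ≠ 0` is exactly `2`.
-/

namespace SimpleGraph

variable {α : Type*} {G : SimpleGraph α}

lemma ediam_le_two_of_commonNeighbors_nonempty
    (h : ∀ u v, u ≠ v → ¬G.Adj u v → (G.commonNeighbors u v).Nonempty) : G.ediam ≤ 2 := by
  refine ediam_le_of_edist_le fun u v => ?_
  by_cases huv : u = v
  · simp [huv]
  by_cases hadj : G.Adj u v
  · rw [edist_eq_one_iff_adj.mpr hadj]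
    norm_num
  · exact (edist_eq_two_iff.mpr ⟨huv, hadj, h u v huv hadj⟩).le

lemma ediam_eq_two_of_commonNeighbors_nonempty
    (h : ∀ u v, u ≠ v → ¬G.Adj u v → (G.commonNeighbors u v).Nonempty)
    {u v : α} (huv : u ≠ v) (hadj : ¬G.Adj u v) : G.ediam = 2 :=
  le_antisymm (ediam_le_two_of_commonNeighbors_nonempty h)
    ((edist_eq_two_iff.mpr ⟨huv, hadj, h u v huv hadj⟩).symm.le.trans edist_le_ediam)

end SimpleGraph

namespace QuadraticMap

variable {F V : Type*} [Field F] [AddCommGroup V] [Module F V] {q : QuadraticForm F V}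

lemma exists_polar_ne_zero (hnd : ∀ x : V, (∀ y : V, polar q x y = 0) → x = 0) {x : V}
    (hx : x ≠ 0) : ∃ y, polar q y x ≠ 0 := by
  by_contra! h
  exact hx (hnd x fun y => polar_comm q x y ▸ h y)

lemma exists_apply_ne_zero (hnd : ∀ x : V, (∀ y : V, polar q x y = 0) → x = 0) {v : V}
    (hv0 : v ≠ 0) : ∃ w, q w ≠ 0 := by
  by_contra! h
  exact hv0 (hnd v fun y => by simp [polar, h])

lemma mem_span_isotropic_of_polar_ne_zero {v x : V} (hv : q v = 0) (hxv : polar q x v ≠ 0) :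
    x ∈ Submodule.span F {t | q t = 0} := by
  have hiso : q (x + (-q x / polar q x v) • v) = 0 := by
    rw [QuadraticMap.map_add (⇑q), QuadraticMap.map_smul, hv, polar_smul_right, smul_eq_mul,
      smul_eq_mul]
    field_simp
    ring
  have hspan {t : V} (ht : q t = 0) : t ∈ Submodule.span F {t | q t = 0} :=
    Submodule.subset_span ht
  simpa using
    Submodule.sub_mem _ (hspan hiso) (Submodule.smul_mem _ (-q x / polar q x v) (hspan hv))

lemma span_isotropic_eq_top (hnd : ∀ x : V, (∀ y : V, polar q x y = 0) → x = 0) {v : V}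
    (hv0 : v ≠ 0) (hv : q v = 0) : Submodule.span F {t | q t = 0} = ⊤ := by
  obtain ⟨u, hu⟩ := exists_polar_ne_zero hnd hv0
  refine Submodule.eq_top_iff'.mpr fun x => ?_
  by_cases hxv : polar q x v = 0
  · have hxu : polar q (x + u) v ≠ 0 := by rwa [polar_add_left, hxv, zero_add]
    simpa using Submodule.sub_mem _ (mem_span_isotropic_of_polar_ne_zero hv hxu)
      (mem_span_isotropic_of_polar_ne_zero hv hu)
  · exact mem_span_isotropic_of_polar_ne_zero hv hxv

lemma exists_isotropic_polar_ne_zero (hnd : ∀ x : V, (∀ y : V, polar q x y = 0) → x = 0)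
    {v : V} (hv0 : v ≠ 0) (hv : q v = 0) {w : V} (hw : w ≠ 0) :
    ∃ t, q t = 0 ∧ polar q t w ≠ 0 := by
  by_contra! h
  have hker : Submodule.span F {t | q t = 0} ≤ LinearMap.ker (polarBilin q w) :=
    Submodule.span_le.mpr fun t ht => by simp [polar_comm q w t, h t ht]
  rw [span_isotropic_eq_top hnd hv0 hv] at hker
  exact hw (hnd w fun y => by simpa using hker (Submodule.mem_top (x := y)))

lemma exists_isotropic_sub_isotropic_of_polar_ne_zero {t w : V} (ht : q t = 0)
    (htw : polar q t w ≠ 0) : ∃ s, q s = 0 ∧ q (w - s) = 0 := by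
  refine ⟨(q w / polar q t w) • t, by rw [QuadraticMap.map_smul, ht, smul_zero], ?_⟩
  rw [sub_eq_add_neg, QuadraticMap.map_add (⇑q), QuadraticMap.map_neg, QuadraticMap.map_smul,
    polar_neg_right, polar_smul_right, polar_comm q w t, ht, smul_eq_mul, smul_eq_mul]
  field_simp
  ring

end QuadraticMap

lemma repGraph_zero_commonNeighbors_nonempty {F V : Type*} [Field F] [AddCommGroup V]
    [Module F V] {q : QuadraticForm F V} (hnd : ∀ x : V, (∀ y : V, polar q x y = 0) → x = 0)
    {v : V} (hv0 : v ≠ 0) (hv : q v = 0) {x y : V} (hxy : x ≠ y)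
    (hadj : ¬(repGraph q 0).Adj x y) : ((repGraph q 0).commonNeighbors x y).Nonempty := by
  have hw : q (x - y) ≠ 0 := fun h => hadj ⟨hxy, h⟩
  obtain ⟨t, ht, htw⟩ := exists_isotropic_polar_ne_zero hnd hv0 hv (w := x - y)
    fun h => hw (by rw [h, QuadraticMap.map_zero])
  obtain ⟨s, hs, hws⟩ := exists_isotropic_sub_isotropic_of_polar_ne_zero ht htw
  have hxz : x - (y + s) = x - y - s := by abel
  have hyz : y - (y + s) = -s := by abel
  refine ⟨y + s, (repGraph q 0).mem_commonNeighbors.mpr ⟨⟨?_, ?_⟩, ⟨?_, ?_⟩⟩⟩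
  · intro h
    rw [← h, sub_self, eq_comm, sub_eq_zero] at hxz
    exact hw (by rwa [← hxz] at hs)
  · rwa [hxz]
  · intro h
    rw [← h, sub_self, eq_comm, neg_eq_zero] at hyz
    exact hw (by rwa [hyz, sub_zero] at hws)
  · rw [hyz, QuadraticMap.map_neg, hs]

theorem stmt_0_general {F V : Type*} [Field F] [AddCommGroup V] [Module F V]
    (q : QuadraticForm F V)
    (hnd : ∀ x : V, (∀ y : V, polar (⇑q) x y = 0) → x = 0)
    (hiso : ∃ v : V, v ≠ 0 ∧ q v = 0) :
    (repGraph q 0).ediam = 2 ∧ (repGraph q 0).Connected := by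
  obtain ⟨v, hv0, hv⟩ := hiso
  obtain ⟨w, hw⟩ := exists_apply_ne_zero hnd hv0
  have hdiam : (repGraph q 0).ediam = 2 :=
    SimpleGraph.ediam_eq_two_of_commonNeighbors_nonempty
      (fun _ _ => repGraph_zero_commonNeighbors_nonempty hnd hv0 hv)
      (u := w) (v := 0) (fun h => hw (h ▸ QuadraticMap.map_zero q))
      (fun h => hw (by simpa using h.2))
  exact ⟨hdiam, SimpleGraph.connected_of_ediam_ne_top (by simp [hdiam])⟩

/-- For a non-degenerate isotropic quadratic form `q` on a finite-dimensional vector space,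
the representation graph `G_{q,0}` has diameter `2`; in particular it is connected. -/
theorem stmt_0 {F V : Type*} [Field F] [AddCommGroup V] [Module F V] [FiniteDimensional F V]
    (q : QuadraticForm F V)
    (hnd : ∀ x : V, (∀ y : V, polar (⇑q) x y = 0) → x = 0)
    (hiso : ∃ v : V, v ≠ 0 ∧ q v = 0) :
    (repGraph q 0).ediam = 2 ∧ (repGraph q 0).Connected :=
  stmt_0_general q hnd hiso
end

section
/- Let F be a field, V a finite-dimensional F-vector space, q : V → F a non-degenerate quadratic form and a ∈ F. If v₁, v₂, w₁, w₂ ∈ V satisfy w₁ − v₁ ≠ 0, w₂ − v₂ ≠ 0 and q(w₁ − v₁) = q(w₂ − v₂), then the graph distances in the representation graph G_{q,a} satisfy d(v₁, w₁) = d(v₂, w₂) (as elements of ℕ∪{∞}). -/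
/-!
Maps `x ↦ f x + c` with `f` an isometry of `q` are automorphisms of `G_{q,a}`, so it suffices
that the isometries act transitively on the nonzero vectors of a given value (a case of Witt's
theorem). For `a, b` independent with `q a = q b`: if `q (a - b) ≠ 0`, the reflection in `a - b`
swaps them; if `a - b` is isotropic, nondegeneracy yields `r` with `polar q a r = 1` and
`polar q b r = -1`, and the negation of the plane `span {a - b, r}` maps `a` to `b`. If
`b = c • a` with `c ≠ ±1`, then `a` is isotropic, and one passes through an isotropic vector `z`
with `polar q a z = 1`, which is independent of `a`.
-/

open QuadraticMap Module

namespace QuadraticMap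

variable {F V : Type*} [Field F] [AddCommGroup V] [Module F V] (q : QuadraticForm F V)

lemma polar_self_eq_two_mul (x : V) : polar q x x = 2 * q x := by
  rw [polar_self, nsmul_eq_mul, Nat.cast_ofNat]

lemma map_sub_eq (x y : V) : q (x - y) = q x + q y - polar q x y := by
  rw [sub_eq_add_neg, QuadraticMap.map_add (⇑q), QuadraticMap.map_neg, polar_neg_right]
  ring

def IsometryEquiv.ofInvolutive (f : V →ₗ[F] V) (hf : Function.Involutive f)
    (hq : ∀ x, q (f x) = q x) : q.IsometryEquiv q where
  toLinearEquiv := LinearEquiv.ofInvolutive f hf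
  map_app' := hq

@[simp]
lemma IsometryEquiv.ofInvolutive_apply (f : V →ₗ[F] V) (hf : Function.Involutive f)
    (hq : ∀ x, q (f x) = q x) (x : V) : IsometryEquiv.ofInvolutive q f hf hq x = f x :=
  rfl

def reflection (v : V) : V →ₗ[F] V :=
  LinearMap.id - ((q v)⁻¹ • (polarBilin q).flip v).smulRight v

lemma reflection_apply (v x : V) : q.reflection v x = x - ((q v)⁻¹ * polar q x v) • v :=
  rfl

variable {q}

lemma reflection_involutive {v : V} (hv : q v ≠ 0) : Function.Involutive (q.reflection v) := by
  intro x
  simp only [reflection_apply, polar_sub_left, polar_smul_left, polar_self_eq_two_mul,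
    smul_eq_mul]
  match_scalars
  · field_simp
  · field_simp
    ring

lemma map_reflection {v : V} (hv : q v ≠ 0) (x : V) : q (q.reflection v x) = q x := by
  rw [reflection_apply, sub_eq_add_neg, ← neg_smul, QuadraticMap.map_add (⇑q),
    QuadraticMap.map_smul, polar_smul_right, smul_eq_mul, smul_eq_mul]
  field_simp
  ring

lemma reflection_sub_apply_left {a b : V} (hq : q a = q b) (hab : q (a - b) ≠ 0) :
    q.reflection (a - b) a = b := by
  have hpolar : polar q a (a - b) = q (a - b) := by
    rw [polar_sub_right, polar_self_eq_two_mul, map_sub_eq, hq]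
    ring
  rw [reflection_apply, hpolar, inv_mul_cancel₀ hab, one_smul, sub_sub_cancel]

variable (q) in
/-- For `q p = 0` and `polar q p r = 2`, this is `-1` on `span {p, r}` and the identity on its
orthogonal complement. -/
def planeNeg (p r : V) : V →ₗ[F] V :=
  LinearMap.id + (q r • (polarBilin q).flip p - (polarBilin q).flip r).smulRight p -
    ((polarBilin q).flip p).smulRight r

variable (q) in
lemma planeNeg_apply (p r x : V) :
    q.planeNeg p r x = x + (q r * polar q x p - polar q x r) • p - polar q x p • r :=
  rfl

section planeNeg

variable {p r : V} (hp : q p = 0) (hpr : polar q p r = 2)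
include hp hpr

lemma planeNeg_involutive : Function.Involutive (q.planeNeg p r) := by
  intro x
  have hrp : polar q r p = 2 := by rw [polar_comm, hpr]
  simp only [planeNeg_apply, polar_add_left, polar_sub_left, polar_smul_left, smul_eq_mul,
    polar_self_eq_two_mul, hp, hpr, hrp]
  match_scalars <;> ring

lemma map_planeNeg (x : V) : q (q.planeNeg p r x) = q x := by
  rw [planeNeg_apply, sub_eq_add_neg, ← neg_smul, QuadraticMap.map_add (⇑q),
    QuadraticMap.map_add (⇑q), polar_add_left, QuadraticMap.map_smul, QuadraticMap.map_smul,
    polar_smul_right, polar_smul_right, polar_smul_left, polar_smul_right, hp, hpr]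
  simp only [smul_eq_mul]
  ring

end planeNeg

section Nondegenerate

variable (hnd : ∀ x : V, (∀ y : V, polar (⇑q) x y = 0) → x = 0)
include hnd

lemma exists_polar_eq_and_polar_eq {a b : V} (hab : LinearIndependent F ![a, b]) (s t : F) :
    ∃ r, polar q a r = s ∧ polar q b r = t := by
  suffices Function.Surjective ((polarBilin q a).prod (polarBilin q b)) by
    obtain ⟨r, hr⟩ := this (s, t)
    exact ⟨r, congrArg Prod.fst hr, congrArg Prod.snd hr⟩
  -- a functional on `F × F` vanishing on the image yields a linear relation between `a` and `b`
  rw [← LinearMap.dualMap_injective_iff, injective_iff_map_eq_zero]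
  intro ℓ hℓ
  have hℓ_apply (c d : F) : ℓ (c, d) = c * ℓ (1, 0) + d * ℓ (0, 1) := by
    rw [← smul_eq_mul, ← smul_eq_mul, ← map_smul, ← map_smul, ← map_add]
    simp
  have hcomb (y : V) : polar q (ℓ (1, 0) • a + ℓ (0, 1) • b) y = 0 := by
    have hy : ℓ (polar q a y, polar q b y) = 0 := LinearMap.congr_fun hℓ y
    rw [hℓ_apply] at hy
    rw [polar_add_left, polar_smul_left, polar_smul_left, smul_eq_mul, smul_eq_mul]
    linear_combination hy
  obtain ⟨h₁, h₂⟩ := LinearIndependent.pair_iff.1 hab _ _ (hnd _ hcomb)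
  ext <;> simpa

lemma exists_isometryEquiv_of_linearIndependent {a b : V} (hab : LinearIndependent F ![a, b])
    (hq : q a = q b) : ∃ f : q.IsometryEquiv q, f a = b := by
  by_cases hsing : q (a - b) = 0
  · obtain ⟨r, hr⟩ := exists_polar_eq_and_polar_eq hnd hab 1 (-1)
    have hpr : polar q (a - b) r = 2 := by
      rw [polar_sub_left, hr.1, hr.2]
      norm_num
    have hap : polar q a (a - b) = 0 := by
      rw [map_sub_eq] at hsing
      rw [polar_sub_right, polar_self_eq_two_mul]
      linear_combination hsing + hq
    refine ⟨IsometryEquiv.ofInvolutive q _ (planeNeg_involutive hsing hpr)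
      (map_planeNeg hsing hpr), ?_⟩
    rw [IsometryEquiv.ofInvolutive_apply, planeNeg_apply, hap, hr.1]
    simp
  · exact ⟨IsometryEquiv.ofInvolutive q _ (reflection_involutive hsing) (map_reflection hsing),
      reflection_sub_apply_left hq hsing⟩

lemma exists_isometryEquiv_smul_of_isotropic {u : V} (hu : u ≠ 0) (hqu : q u = 0) {c : F}
    (hc : c ≠ 0) : ∃ f : q.IsometryEquiv q, f u = c • u := by
  obtain ⟨y, hy⟩ : ∃ y, polar q u y = 1 := by
    obtain ⟨y, hy⟩ : ∃ y, polar q u y ≠ 0 := by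
      by_contra! h
      exact hu (hnd u h)
    exact ⟨(polar q u y)⁻¹ • y, by rw [polar_smul_right, smul_eq_mul, inv_mul_cancel₀ hy]⟩
  set z := y - q y • u
  have hz : polar q u z = 1 := by
    rw [polar_sub_right, polar_smul_right, polar_self_eq_two_mul, hqu, hy, smul_eq_mul]
    ring
  have hqz : q z = 0 := by
    rw [map_sub_eq, QuadraticMap.map_smul, polar_smul_right, polar_comm, hy, hqu, smul_eq_mul,
      smul_eq_mul]
    ring
  have hz_ne (d : F) : d • u ≠ z := by
    intro h
    rw [← h, polar_smul_right, polar_self_eq_two_mul, hqu] at hz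
    simp at hz
  obtain ⟨f₁, hf₁⟩ := exists_isometryEquiv_of_linearIndependent hnd
    ((LinearIndependent.pair_iff' hu).2 hz_ne) (by rw [hqu, hqz])
  obtain ⟨f₂, hf₂⟩ := exists_isometryEquiv_of_linearIndependent hnd
    (LinearIndependent.pair_symm_iff.1 <| (LinearIndependent.pair_iff' (smul_ne_zero hc hu)).2
      fun d => by rw [smul_smul]; exact hz_ne _)
    (by rw [hqz, QuadraticMap.map_smul, hqu, smul_zero])
  exact ⟨f₁.trans f₂, show f₂ (f₁ u) = c • u by rw [hf₁, hf₂]⟩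

lemma exists_isometryEquiv_apply_eq {u₁ u₂ : V} (hu₁ : u₁ ≠ 0) (hu₂ : u₂ ≠ 0)
    (hq : q u₁ = q u₂) : ∃ f : q.IsometryEquiv q, f u₁ = u₂ := by
  by_cases hind : LinearIndependent F ![u₁, u₂]
  · exact exists_isometryEquiv_of_linearIndependent hnd hind hq
  obtain ⟨c, rfl⟩ : ∃ c : F, c • u₁ = u₂ := by
    simpa [LinearIndependent.pair_iff' hu₁] using hind
  by_cases hc : c ^ 2 = 1
  · rcases sq_eq_one_iff.1 hc with rfl | rfl
    · exact ⟨IsometryEquiv.refl q, (one_smul F u₁).symm⟩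
    · exact ⟨IsometryEquiv.ofInvolutive q (-LinearMap.id) neg_involutive (by simp), by simp⟩
  have hqu : q u₁ = 0 := by
    rw [QuadraticMap.map_smul, smul_eq_mul] at hq
    have h : (c ^ 2 - 1) * q u₁ = 0 := by linear_combination -hq
    exact (mul_eq_zero.1 h).resolve_left (sub_ne_zero.2 hc)
  exact exists_isometryEquiv_smul_of_isotropic hnd hu₁ hqu (by rintro rfl; simp at hu₂)

end Nondegenerate

end QuadraticMap

namespace SimpleGraph

variable {V W : Type*} {G : SimpleGraph V} {G' : SimpleGraph W}

lemma Hom.edist_map_le (f : G →g G') (u v : V) : G'.edist (f u) (f v) ≤ G.edist u v := by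
  by_cases huv : G.Reachable u v
  · obtain ⟨w, hw⟩ := huv.exists_walk_length_eq_edist
    rw [← hw, ← Walk.length_map f w]
    exact edist_le _
  · rw [edist_eq_top_of_not_reachable huv]
    exact le_top

lemma Iso.edist_eq (e : G ≃g G') (u v : V) : G'.edist (e u) (e v) = G.edist u v :=
  le_antisymm (Hom.edist_map_le e.toHom u v) <| by
    simpa using Hom.edist_map_le e.symm.toHom (e u) (e v)

end SimpleGraph

def repGraphAffineIso {F V : Type*} [Field F] [AddCommGroup V] [Module F V]
    {q : QuadraticForm F V} (a : F) (f : q.IsometryEquiv q) (c : V) :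
    repGraph q a ≃g repGraph q a where
  toEquiv := f.toLinearEquiv.toEquiv.trans (Equiv.addRight c)
  map_rel_iff' {x y} := by
    simp only [repGraph, Equiv.trans_apply, LinearEquiv.coe_toEquiv,
      IsometryEquiv.coe_toLinearEquiv, Equiv.coe_addRight, add_sub_add_right_eq_sub, ← map_sub,
      f.map_app, (add_left_injective c).ne_iff, (EquivLike.injective f).ne_iff]

theorem stmt_1_general {F V : Type*} [Field F] [AddCommGroup V] [Module F V]
    (q : QuadraticForm F V)
    (hnd : ∀ x : V, (∀ y : V, polar (⇑q) x y = 0) → x = 0)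
    (a : F) (v₁ v₂ w₁ w₂ : V)
    (h1 : w₁ - v₁ ≠ 0) (h2 : w₂ - v₂ ≠ 0)
    (h : q (w₁ - v₁) = q (w₂ - v₂)) :
    (repGraph q a).edist v₁ w₁ = (repGraph q a).edist v₂ w₂ := by
  obtain ⟨f, hf⟩ := exists_isometryEquiv_apply_eq hnd h1 h2 h
  set g := repGraphAffineIso a f (v₂ - f v₁)
  have hv : g v₁ = v₂ := add_sub_cancel _ _
  have hw : g w₁ = w₂ := by
    show f w₁ + (v₂ - f v₁) = w₂
    rw [add_sub_left_comm, ← map_sub, hf, add_sub_cancel]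
  rw [← g.edist_eq, hv, hw]

/-- If `q (w₁ - v₁) = q (w₂ - v₂) ≠ 0`-vectors agree in value, the graph distances in
`G_{q,a}` satisfy `d(v₁, w₁) = d(v₂, w₂)`. -/
theorem stmt_1 {F V : Type*} [Field F] [AddCommGroup V] [Module F V] [FiniteDimensional F V]
    (q : QuadraticForm F V)
    (hnd : ∀ x : V, (∀ y : V, polar (⇑q) x y = 0) → x = 0)
    (a : F) (v₁ v₂ w₁ w₂ : V)
    (h1 : w₁ - v₁ ≠ 0) (h2 : w₂ - v₂ ≠ 0)
    (h : q (w₁ - v₁) = q (w₂ - v₂)) :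
    (repGraph q a).edist v₁ w₁ = (repGraph q a).edist v₂ w₂ :=
  stmt_1_general q hnd a v₁ v₂ w₁ w₂ h1 h2 h
end

section
/- Let F be a field, let q' and q'' be quadratic forms on finite-dimensional F-vector spaces V' and V'', and let q = q' ⊥ q'' be their orthogonal sum on V = V' × V', i.e. q(v,w) = q'(v) + q''(w). Let a ∈ F. If q' is universal (every element of F∗ is represented by q') and the representation graph G_{q',a} is connected, then the representation graph G_{q,a} is connected. -/
open QuadraticMap Module

/-!
Each fibre `V' × {w}` of `G_{q' ⊥ q'', a}` contains a copy of the connected graph `G_{q', a}`.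
Any two fibres `V' × {w}` and `V' × {u}` are joined by an edge `(x, w) — (x - v, u)`, where
universality of `q'` provides `v` with `q' v = a - q'' (w - u)` (for `a = q'' (w - u)` take `v = 0`).
-/

section

variable {F V' V'' : Type*} [Field F] [AddCommGroup V'] [Module F V'] [AddCommGroup V'']
  [Module F V''] {q' : QuadraticForm F V'} {q'' : QuadraticForm F V''} {a : F}

theorem QuadraticMap.exists_apply_eq_of_universal
    (huniv : ∀ c : F, c ≠ 0 → ∃ v : V', q' v = c) (c : F) : ∃ v, q' v = c := by
  rcases eq_or_ne c 0 with rfl | hc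
  · exact ⟨0, q'.map_zero⟩
  · exact huniv c hc

theorem repGraph_prod_adj_of_snd_ne {x y : V'} {w u : V''} (hwu : w ≠ u)
    (h : q' (x - y) + q'' (w - u) = a) : (repGraph (q'.prod q'') a).Adj (x, w) (y, u) :=
  ⟨fun hxy => hwu (congrArg Prod.snd hxy), h⟩

theorem repGraph_prod_adj_mk_right {x y : V'} (w : V'') (h : (repGraph q' a).Adj x y) :
    (repGraph (q'.prod q'') a).Adj (x, w) (y, w) := by
  refine ⟨fun hxy => h.1 (congrArg Prod.fst hxy), ?_⟩
  change q' (x - y) + q'' (w - w) = a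
  rw [sub_self, q''.map_zero, add_zero, h.2]

theorem repGraph_prod_reachable_mk_right (hconn : (repGraph q' a).Connected) (w : V'')
    (x y : V') : (repGraph (q'.prod q'') a).Reachable (x, w) (y, w) :=
  (hconn.preconnected x y).map ⟨(·, w), repGraph_prod_adj_mk_right w⟩

end

theorem stmt_4_general {F V' V'' : Type*} [Field F]
    [AddCommGroup V'] [Module F V']
    [AddCommGroup V''] [Module F V'']
    (q' : QuadraticForm F V') (q'' : QuadraticForm F V'') (a : F)
    (huniv : ∀ c : F, c ≠ 0 → ∃ v : V', q' v = c)
    (hconn : (repGraph q' a).Connected) :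
    (repGraph (q'.prod q'') a).Connected := by
  refine ⟨fun ⟨x, w⟩ ⟨y, u⟩ => ?_⟩
  rcases eq_or_ne w u with rfl | hwu
  · exact repGraph_prod_reachable_mk_right hconn w x y
  obtain ⟨v, hv⟩ := exists_apply_eq_of_universal huniv (a - q'' (w - u))
  have hadj : (repGraph (q'.prod q'') a).Adj (x, w) (x - v, u) :=
    repGraph_prod_adj_of_snd_ne hwu (by rw [sub_sub_cancel, hv, sub_add_cancel])
  exact hadj.reachable.trans (repGraph_prod_reachable_mk_right hconn u (x - v) y)

/-- If `q'` is universal and `G_{q',a}` is connected, then the representation graph of the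
orthogonal sum `q' ⊥ q''` is connected. -/
theorem stmt_4 {F V' V'' : Type*} [Field F]
    [AddCommGroup V'] [Module F V'] [FiniteDimensional F V']
    [AddCommGroup V''] [Module F V''] [FiniteDimensional F V'']
    (q' : QuadraticForm F V') (q'' : QuadraticForm F V'') (a : F)
    (huniv : ∀ c : F, c ≠ 0 → ∃ v : V', q' v = c)
    (hconn : (repGraph q' a).Connected) :
    (repGraph (q'.prod q'') a).Connected :=
  stmt_4_general q' q'' a huniv hconn
end

section
/- Let F be a field with at least 5 elements. Then the set {(x, x⁻¹) : x ∈ F, x ≠ 0} generates F² = F × F as an additive group. -/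
/-!
For `x ≠ 0` the three points `x`, `t * x`, `-(1 + t) * x` have first coordinates summing to `0`,
while their inverses sum to `(t ^ 2 + t + 1) / (t * (t + 1)) * x⁻¹`. Choosing `t` with this
coefficient defined and nonzero (possible once `F` has at least 5 elements, as only the roots of
`X * (X + 1) * (X ^ 2 + X + 1)` are excluded) and letting `x` vary puts every `(0, w)` in the
subgroup; then `(a, b) = (a, a⁻¹) + (0, b - a⁻¹)`.
-/

open Polynomial

section

variable {F : Type*} [Field F]

theorem exists_ne_zero_add_one_ne_zero_sq_add_add_one_ne_zero (hF : 5 ≤ Cardinal.mk F) :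
    ∃ t : F, t ≠ 0 ∧ t + 1 ≠ 0 ∧ t ^ 2 + t + 1 ≠ 0 := by
  have hp : (X * (X + 1) * (X ^ 2 + X + 1) : F[X]) ≠ 0 := by
    refine mul_ne_zero (mul_ne_zero X_ne_zero (X_add_C_ne_zero 1)) fun h => ?_
    simpa [coeff_X_pow] using congrArg (coeff · 0) h
  have hdeg : ((X * (X + 1) * (X ^ 2 + X + 1) : F[X]).natDegree : Cardinal) < Cardinal.mk F := by
    have : (X * (X + 1) * (X ^ 2 + X + 1) : F[X]).natDegree ≤ 4 := by compute_degree
    calc _ ≤ (4 : Cardinal) := by exact_mod_cast this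
      _ < 5 := by norm_num
      _ ≤ Cardinal.mk F := hF
  obtain ⟨t, ht⟩ := exists_eval_ne_zero_of_natDegree_lt_card _ hp hdeg
  simp only [eval_mul, eval_add, eval_pow, eval_X, eval_one, mul_ne_zero_iff] at ht
  exact ⟨t, ht.1.1, ht.1.2, ht.2⟩

theorem inv_add_inv_mul_add_inv_neg_mul {t x : F} (ht : t ≠ 0) (ht' : t + 1 ≠ 0) (hx : x ≠ 0) :
    x⁻¹ + (t * x)⁻¹ + (-((1 + t) * x))⁻¹ = (t ^ 2 + t + 1) / (t * (t + 1)) * x⁻¹ := by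
  have : 1 + t ≠ 0 := by rwa [add_comm]
  field_simp
  ring

def invGraph (F : Type*) [Field F] : Set (F × F) :=
  {p | ∃ x : F, x ≠ 0 ∧ p = (x, x⁻¹)}

theorem mk_inv_mem_closure_invGraph {x : F} (hx : x ≠ 0) :
    (x, x⁻¹) ∈ AddSubgroup.closure (invGraph F) :=
  AddSubgroup.subset_closure ⟨x, hx, rfl⟩

theorem zero_mk_mem_closure_invGraph {t : F} (ht : t ≠ 0) (ht' : t + 1 ≠ 0)
    (ht'' : t ^ 2 + t + 1 ≠ 0) (w : F) : (0, w) ∈ AddSubgroup.closure (invGraph F) := by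
  rcases eq_or_ne w 0 with rfl | hw
  · exact zero_mem _
  set c := (t ^ 2 + t + 1) / (t * (t + 1))
  have hc : c ≠ 0 := div_ne_zero ht'' (mul_ne_zero ht ht')
  have hx : c / w ≠ 0 := div_ne_zero hc hw
  have hsum : ((0, w) : F × F) = (c / w, (c / w)⁻¹) + (t * (c / w), (t * (c / w))⁻¹)
      + (-((1 + t) * (c / w)), (-((1 + t) * (c / w)))⁻¹) := by
    refine Prod.ext (by simp only [Prod.fst_add]; ring) ?_
    rw [Prod.snd_add, Prod.snd_add, inv_add_inv_mul_add_inv_neg_mul ht ht' hx, inv_div,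
      mul_div_cancel₀ _ hc]
  rw [hsum]
  have h1t : 1 + t ≠ 0 := by rwa [add_comm]
  exact add_mem (add_mem (mk_inv_mem_closure_invGraph hx)
    (mk_inv_mem_closure_invGraph (mul_ne_zero ht hx)))
    (mk_inv_mem_closure_invGraph (neg_ne_zero.mpr (mul_ne_zero h1t hx)))

theorem closure_invGraph_eq_top (hF : 5 ≤ Cardinal.mk F) :
    AddSubgroup.closure (invGraph F) = ⊤ := by
  obtain ⟨t, ht, ht', ht''⟩ := exists_ne_zero_add_one_ne_zero_sq_add_add_one_ne_zero hF
  have hvert := zero_mk_mem_closure_invGraph ht ht' ht''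
  refine eq_top_iff.mpr fun ⟨a, b⟩ _ => ?_
  rcases eq_or_ne a 0 with rfl | ha
  · exact hvert b
  have hab : ((a, b) : F × F) = (a, a⁻¹) + (0, b - a⁻¹) := by ext <;> simp
  rw [hab]
  exact add_mem (mk_inv_mem_closure_invGraph ha) (hvert _)

end

/-- Over a field with at least 5 elements, the set `{(x, x⁻¹) : x ≠ 0}` generates
`F × F` as an additive group. -/
theorem stmt_5 {F : Type*} [Field F] (hF : 5 ≤ Cardinal.mk F) :
    AddSubgroup.closure {p : F × F | ∃ x : F, x ≠ 0 ∧ p = (x, x⁻¹)} = ⊤ :=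
  closure_invGraph_eq_top hF
end

section
/- Let F be a field, V a 2-dimensional F-vector space, q : V → F a non-degenerate quadratic form, and a, b ∈ F with a ≠ 0 and b ≠ 0. For every w ∈ V with w ≠ 0, there are at most two pairs (u, v) ∈ V × V with q(u) = a, q(v) = b and u + v = w. -/
open QuadraticMap Module

private lemma aux_span_pair {F V : Type*} [Field F] [AddCommGroup V] [Module F V]
    (hdim : Module.finrank F V = 2) {x y : V} (h : LinearIndependent F ![x, y]) (z : V) :
    ∃ s t : F, s • x + t • y = z := by
  have hsp : Submodule.span F (Set.range ![x, y]) = ⊤ :=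
    h.span_eq_top_of_card_eq_finrank (by simp [hdim])
  have hr : Set.range ![x, y] = ({x, y} : Set V) := by
    ext v
    simp only [Set.mem_range, Fin.exists_fin_two, Matrix.cons_val_zero, Matrix.cons_val_one, Matrix.head_cons, Set.mem_insert_iff, Set.mem_singleton_iff]
    tauto
  rw [hr] at hsp
  exact Submodule.mem_span_pair.1 (hsp ▸ Submodule.mem_top)

/-- For a 2-dimensional non-degenerate quadratic form `q`, `a, b ≠ 0` and `w ≠ 0`, there
are at most two pairs `(u, v)` with `q u = a`, `q v = b` and `u + v = w`. -/
theorem stmt_8 {F V : Type*} [Field F] [AddCommGroup V] [Module F V]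
    (q : QuadraticForm F V) (hdim : Module.finrank F V = 2)
    (hnd : ∀ x : V, (∀ y : V, polar (⇑q) x y = 0) → x = 0)
    (a b : F) (ha : a ≠ 0) (hb : b ≠ 0) (w : V) (hw : w ≠ 0) :
    ∃ p₁ p₂ : V × V,
      {p : V × V | q p.1 = a ∧ q p.2 = b ∧ p.1 + p.2 = w} ⊆ {p₁, p₂} := by
  set S := {p : V × V | q p.1 = a ∧ q p.2 = b ∧ p.1 + p.2 = w} with hS
  -- polar of w against any solution's first coordinate is constant
  have hpolarw : ∀ p ∈ S, polar (⇑q) w p.1 = q w + a - b := by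
    rintro ⟨u, v⟩ ⟨hu, hv, huv⟩
    have hveq : v = w + -u := by rw [← huv]; abel
    have h1 : q (w + -u) = q w + q (-u) + polar (⇑q) w (-u) := QuadraticMap.map_add (⇑q) w (-u)
    rw [← hveq, hv, QuadraticMap.map_neg, hu, polar_neg_right] at h1
    simp only [Prod.fst]
    linear_combination h1
  -- key claim : among any three solutions, two are equal
  have key : ∀ p₁ ∈ S, ∀ p₂ ∈ S, ∀ p₃ ∈ S, p₁ = p₂ ∨ p₁ = p₃ ∨ p₂ = p₃ := by
    intro p₁ hp₁ p₂ hp₂ p₃ hp₃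
    by_contra hcon
    push_neg at hcon
    obtain ⟨h12, h13, h23⟩ := hcon
    obtain ⟨u₁, v₁⟩ := p₁
    obtain ⟨u₂, v₂⟩ := p₂
    obtain ⟨u₃, v₃⟩ := p₃
    obtain ⟨hq1, hb1, hw1⟩ := hp₁
    obtain ⟨hq2, hb2, hw2⟩ := hp₂
    obtain ⟨hq3, hb3, hw3⟩ := hp₃
    -- v's are determined by u's, so distinctness of pairs gives distinctness of u's
    have hvdet : ∀ u v : V, u + v = w → v = w - u := by
      intro u v h; rw [← h]; abel
    have hu12 : u₁ ≠ u₂ := by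
      intro h; apply h12
      rw [Prod.mk.injEq]
      exact ⟨h, by rw [hvdet u₁ v₁ hw1, hvdet u₂ v₂ hw2, h]⟩
    have hu13 : u₁ ≠ u₃ := by
      intro h; apply h13
      rw [Prod.mk.injEq]
      exact ⟨h, by rw [hvdet u₁ v₁ hw1, hvdet u₃ v₃ hw3, h]⟩
    have hu23 : u₂ ≠ u₃ := by
      intro h; apply h23
      rw [Prod.mk.injEq]
      exact ⟨h, by rw [hvdet u₂ v₂ hw2, hvdet u₃ v₃ hw3, h]⟩
    set d₁ := u₂ - u₁ with hd₁def
    set d₂ := u₃ - u₁ with hd₂def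
    have hd₁ : d₁ ≠ 0 := sub_ne_zero.2 (Ne.symm hu12)
    have hd₂ : d₂ ≠ 0 := sub_ne_zero.2 (Ne.symm hu13)
    have hd12 : d₁ ≠ d₂ := by
      intro h
      apply hu23
      have : u₂ - u₁ = u₃ - u₁ := h
      have := sub_left_injective.eq_iff.1 this
      exact this
    -- polar w vanishes on the differences
    have hker₁ : polar (⇑q) w d₁ = 0 := by
      rw [hd₁def, polar_sub_right, hpolarw (u₂, v₂) ⟨hq2, hb2, hw2⟩,
        hpolarw (u₁, v₁) ⟨hq1, hb1, hw1⟩, sub_self]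
    have hker₂ : polar (⇑q) w d₂ = 0 := by
      rw [hd₂def, polar_sub_right, hpolarw (u₃, v₃) ⟨hq3, hb3, hw3⟩,
        hpolarw (u₁, v₁) ⟨hq1, hb1, hw1⟩, sub_self]
    -- the quadratic equations along the differences
    have heq : ∀ u' : V, q u' = a → q (u' - u₁) + polar (⇑q) u₁ (u' - u₁) = 0 := by
      intro u' hu'
      have h1 : q (u₁ + (u' - u₁)) = q u₁ + q (u' - u₁) + polar (⇑q) u₁ (u' - u₁) :=
        QuadraticMap.map_add (⇑q) u₁ (u' - u₁)
      rw [show u₁ + (u' - u₁) = u' by abel, hu', hq1] at h1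
      linear_combination -h1
    have heq₁ : q d₁ + polar (⇑q) u₁ d₁ = 0 := heq u₂ hq2
    have heq₂ : q d₂ + polar (⇑q) u₁ d₂ = 0 := heq u₃ hq3
    -- d₁ and d₂ cannot be linearly independent else w is in the radical
    by_cases hind : LinearIndependent F ![d₁, d₂]
    · apply hw
      apply hnd
      intro y
      obtain ⟨s, t, hst⟩ := aux_span_pair hdim hind y
      rw [← hst, polar_add_right, polar_smul_right, polar_smul_right, hker₁, hker₂]
      simp
    · rw [LinearIndependent.pair_iff' hd₁] at hind
      push_neg at hind
      obtain ⟨t, ht⟩ := hind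
      have ht0 : t ≠ 0 := by
        intro h; apply hd₂; rw [← ht, h, zero_smul]
      have ht1 : t ≠ 1 := by
        intro h; apply hd12; rw [← ht, h, one_smul]
      -- substitute d₂ = t • d₁
      have heq₂' : t * t * q d₁ + t * polar (⇑q) u₁ d₁ = 0 := by
        have h1 : q (t • d₁) = (t * t) • q d₁ := QuadraticMap.map_smul q t d₁
        have h2 : polar (⇑q) u₁ (t • d₁) = t • polar (⇑q) u₁ d₁ := polar_smul_right q t u₁ d₁
        rw [ht] at h1 h2
        rw [smul_eq_mul] at h1 h2
        linear_combination heq₂ - h1 - h2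
      have hqd₁ : q d₁ = 0 := by
        have h3 : t * (t - 1) * q d₁ = 0 := by linear_combination heq₂' - t * heq₁
        rcases mul_eq_zero.1 h3 with h | h
        · rcases mul_eq_zero.1 h with h' | h'
          · exact absurd h' ht0
          · exact absurd (by linear_combination h') ht1
        · exact h
      have hpol₁ : polar (⇑q) u₁ d₁ = 0 := by linear_combination heq₁ - hqd₁
      -- u₁ and d₁ are linearly independent
      have hu₁ne : u₁ ≠ 0 := by
        intro h; apply ha; rw [← hq1, h, QuadraticMap.map_zero]
      have hind' : LinearIndependent F ![u₁, d₁] := by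
        rw [LinearIndependent.pair_iff' hu₁ne]
        intro s hs
        apply hd₁
        have : q d₁ = (s * s) • q u₁ := by rw [← hs]; exact QuadraticMap.map_smul q s u₁
        rw [hqd₁, hq1, smul_eq_mul] at this
        have hs0 : s = 0 := by
          rcases mul_eq_zero.1 this.symm with h | h
          · exact mul_self_eq_zero.1 h
          · exact absurd h ha
        rw [← hs, hs0, zero_smul]
      -- d₁ is in the radical, contradiction
      apply hd₁
      apply hnd
      intro y
      obtain ⟨s, t', hst⟩ := aux_span_pair hdim hind' y
      rw [← hst, polar_add_right, polar_smul_right, polar_smul_right,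
        polar_comm (⇑q) d₁ u₁, hpol₁, polar_comm (⇑q) d₁ d₁]
      have hself : polar (⇑q) d₁ d₁ = 0 := by
        have := polar_self q d₁
        rw [hqd₁] at this
        simpa using this
      rw [hself]
      simp
  -- conclude from the key claim
  by_cases h1 : ∃ p, p ∈ S
  · obtain ⟨p₁, hp₁⟩ := h1
    by_cases h2 : ∃ p ∈ S, p ≠ p₁
    · obtain ⟨p₂, hp₂, hne⟩ := h2
      refine ⟨p₁, p₂, fun p hp => ?_⟩
      rcases key p₁ hp₁ p₂ hp₂ p hp with h | h | h
      · exact absurd h.symm hne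
      · exact Or.inl h.symm
      · exact Or.inr h.symm
    · push_neg at h2
      exact ⟨p₁, p₁, fun p hp => by simp [h2 p hp]⟩
  · exact ⟨0, 0, fun p hp => absurd ⟨p, hp⟩ h1⟩
end

section
/- Let F be a field, V a 2-dimensional F-vector space, q : V → F a non-degenerate quadratic form, and a, b ∈ F with a ≠ 0 and b ≠ 0. Let w ∈ V with q(w) ≠ 0 and suppose w = u + v for some u, v with q(u) = a, q(v) = b. Then there exist two distinct pairs (u, v) ∈ V × V with q(u) = a, q(v) = b and u + v = w if and only if there exists such a pair (u, v) with u and v linearly independent. -/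
open QuadraticMap Module

/-!
If the summands of `w = x + y` are linearly dependent, then `x = c • w` with
`c² q(w) = q(x)` and `(1 - c)² q(w) = q(y)`, and these two equations determine `c`; so two
distinct decompositions cannot both be dependent. Conversely, if `x, y` are independent, let `ρ`
be the reflection in the hyperplane orthogonal to `w`. Since `ρ w = -w`, the pair `(-ρ x, -ρ y)`
is a second decomposition with the same values of `q`. It coincides with `(x, y)` only if
`2 = 0` and `x` is orthogonal to `x + y`, hence to all of `V = span {x, y}`, which
non-degeneracy rules out.
-/

theorem eq_of_sq_eq_sq_of_sq_one_sub_eq {R : Type*} [CommRing R] [IsDomain R] {c d : R}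
    (h : c ^ 2 = d ^ 2) (h' : (1 - c) ^ 2 = (1 - d) ^ 2) : c = d := by
  by_contra hne
  have hcd : c - d ≠ 0 := sub_ne_zero.mpr hne
  have hsum : c + d = 0 :=
    (mul_eq_zero.mp (by linear_combination h : (c - d) * (c + d) = 0)).resolve_left hcd
  have hsum' : c + d - 2 = 0 :=
    (mul_eq_zero.mp (by linear_combination h' : (c - d) * (c + d - 2) = 0)).resolve_left hcd
  -- `c + d` is both `0` and `2`, so the characteristic is `2` and `c = -d = d`.
  exact hcd (by linear_combination (1 - d) * hsum + d * hsum')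

theorem exists_smul_add_eq_of_not_linearIndependent {K V : Type*} [Field K] [AddCommGroup V]
    [Module K V] {x y : V} (h : ¬LinearIndependent K ![x, y]) (hxy : x + y ≠ 0) :
    ∃ c : K, c • (x + y) = x := by
  rw [← LinearIndependent.pair_add_right_iff, LinearIndependent.pair_symm_iff,
    LinearIndependent.pair_iff' hxy] at h
  push Not at h
  exact h

namespace QuadraticForm

variable {F V : Type*} [Field F] [AddCommGroup V] [Module F V] {q : QuadraticForm F V} {w : V}

theorem eq_of_map_smul_eq (hw : q w ≠ 0) {c d : F} (h : q (c • w) = q (d • w))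
    (h' : q (w - c • w) = q (w - d • w)) : c = d := by
  have hsmul (e : F) : q (e • w) = e ^ 2 * q w := by
    rw [QuadraticMap.map_smul, smul_eq_mul, pow_two]
  have hsub (e : F) : w - e • w = (1 - e) • w := by rw [sub_smul, one_smul]
  rw [hsmul, hsmul] at h
  rw [hsub, hsub, hsmul, hsmul] at h'
  exact eq_of_sq_eq_sq_of_sq_one_sub_eq (mul_right_cancel₀ hw h) (mul_right_cancel₀ hw h')

theorem eq_of_not_linearIndependent (hw : q w ≠ 0) {x₁ y₁ x₂ y₂ : V}
    (hsum₁ : x₁ + y₁ = w) (hsum₂ : x₂ + y₂ = w) (hx : q x₁ = q x₂) (hy : q y₁ = q y₂)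
    (h₁ : ¬LinearIndependent F ![x₁, y₁]) (h₂ : ¬LinearIndependent F ![x₂, y₂]) :
    x₁ = x₂ ∧ y₁ = y₂ := by
  have hw₀ : w ≠ 0 := fun h ↦ hw (by rw [h, QuadraticMap.map_zero])
  obtain ⟨c₁, hc₁⟩ := exists_smul_add_eq_of_not_linearIndependent h₁ (hsum₁ ▸ hw₀)
  obtain ⟨c₂, hc₂⟩ := exists_smul_add_eq_of_not_linearIndependent h₂ (hsum₂ ▸ hw₀)
  rw [hsum₁] at hc₁
  rw [hsum₂] at hc₂
  obtain rfl : y₁ = w - x₁ := eq_sub_of_add_eq' hsum₁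
  obtain rfl : y₂ = w - x₂ := eq_sub_of_add_eq' hsum₂
  subst hc₁ hc₂
  obtain rfl : c₁ = c₂ := eq_of_map_smul_eq hw hx hy
  exact ⟨rfl, rfl⟩

theorem polar_self_div_self (hw : q w ≠ 0) : polar q w w / q w = 2 := by
  rw [polar_self, nsmul_eq_mul, Nat.cast_ofNat, mul_div_assoc, div_self hw, mul_one]

variable (q) in
noncomputable def reflection (hw : q w ≠ 0) : V ≃ₗ[F] V :=
  Module.reflection (x := w) (f := (q w)⁻¹ • (polarBilin q).flip w) <| by
    simp only [LinearMap.smul_apply, LinearMap.flip_apply, polarBilin_apply_apply, smul_eq_mul]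
    rw [inv_mul_eq_div, polar_self_div_self hw]

theorem reflection_apply (hw : q w ≠ 0) (x : V) :
    q.reflection hw x = x - (polar q x w / q w) • w := by
  simp [reflection, Module.reflection_apply, div_eq_inv_mul]

@[simp]
theorem reflection_apply_self (hw : q w ≠ 0) : q.reflection hw w = -w :=
  Module.reflection_apply_self _

@[simp]
theorem map_reflection (hw : q w ≠ 0) (x : V) : q (q.reflection hw x) = q x := by
  have hs : polar q x w / q w * q w = polar q x w := div_mul_cancel₀ _ hw
  rw [reflection_apply, sub_eq_add_neg, ← neg_smul, QuadraticMap.map_add q,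
    QuadraticMap.map_smul, polar_smul_right, smul_eq_mul, smul_eq_mul]
  linear_combination (polar q x w / q w) * hs

theorem eq_zero_of_polar_eq_zero (hnd : ∀ x : V, (∀ y : V, polar q x y = 0) → x = 0) {x y : V}
    (hspan : Submodule.span F {x, y} = ⊤) (hxx : polar q x x = 0) (hxy : polar q x y = 0) :
    x = 0 := by
  refine hnd x fun z ↦ ?_
  obtain ⟨r, s, rfl⟩ := Submodule.mem_span_pair.mp (hspan ▸ Submodule.mem_top : z ∈ _)
  rw [polar_add_right, polar_smul_right, polar_smul_right, hxx, hxy, smul_zero, smul_zero,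
    add_zero]

theorem reflection_ne_neg (hdim : finrank F V = 2)
    (hnd : ∀ x : V, (∀ y : V, polar q x y = 0) → x = 0) {x y : V}
    (hxy : LinearIndependent F ![x, y]) (hw : q (x + y) ≠ 0) : q.reflection hw x ≠ -x := by
  intro h
  rw [reflection_apply] at h
  set s := polar q x (x + y) / q (x + y)
  have hcomb : (s - 2) • x + s • y = 0 := by linear_combination (norm := module) -h
  obtain ⟨hs2, hs0⟩ := LinearIndependent.pair_iff.mp hxy _ _ hcomb
  have hchar : (2 : F) = 0 := by linear_combination hs0 - hs2
  have hxw : polar q x (x + y) = 0 := (div_eq_zero_iff.mp hs0).resolve_right hw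
  have hxx : polar q x x = 0 := by
    rw [polar_self, nsmul_eq_mul, Nat.cast_ofNat, hchar, zero_mul]
  have hxy' : polar q x y = 0 := by rwa [polar_add_right, hxx, zero_add] at hxw
  have hspan : Submodule.span F {x, y} = ⊤ := by
    rw [← Matrix.range_cons_cons_empty]
    exact hxy.span_eq_top_of_card_eq_finrank (by simp [hdim])
  exact hxy.ne_zero 0 (eq_zero_of_polar_eq_zero hnd hspan hxx hxy')

end QuadraticForm

theorem stmt_9_general {F V : Type*} [Field F] [AddCommGroup V] [Module F V]
    (q : QuadraticForm F V) (hdim : Module.finrank F V = 2)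
    (hnd : ∀ x : V, (∀ y : V, polar (⇑q) x y = 0) → x = 0)
    (a b : F)
    (w : V) (hw : q w ≠ 0) :
    (∃ p₁ p₂ : V × V, p₁ ≠ p₂ ∧
        (q p₁.1 = a ∧ q p₁.2 = b ∧ p₁.1 + p₁.2 = w) ∧
        (q p₂.1 = a ∧ q p₂.2 = b ∧ p₂.1 + p₂.2 = w)) ↔
      (∃ u' v' : V, q u' = a ∧ q v' = b ∧ u' + v' = w ∧ LinearIndependent F ![u', v']) := by
  constructor
  · rintro ⟨⟨x₁, y₁⟩, ⟨x₂, y₂⟩, hne, ⟨hx₁, hy₁, hsum₁⟩, hx₂, hy₂, hsum₂⟩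
    by_contra! hdep
    obtain ⟨rfl, rfl⟩ := QuadraticForm.eq_of_not_linearIndependent hw hsum₁ hsum₂
      (hx₁.trans hx₂.symm) (hy₁.trans hy₂.symm) (hdep _ _ hx₁ hy₁ hsum₁) (hdep _ _ hx₂ hy₂ hsum₂)
    exact hne rfl
  · rintro ⟨x, y, hx, hy, rfl, hxy⟩
    let ρ := q.reflection hw
    refine ⟨(x, y), (-ρ x, -ρ y), ?_, ⟨hx, hy, rfl⟩, ?_, ?_, ?_⟩
    · intro h
      exact QuadraticForm.reflection_ne_neg hdim hnd hxy hw
        (neg_eq_iff_eq_neg.mp (congrArg Prod.fst h).symm)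
    · simpa [ρ] using hx
    · simpa [ρ] using hy
    · rw [← neg_add, ← map_add, QuadraticForm.reflection_apply_self, neg_neg]

/-- For a 2-dimensional non-degenerate quadratic form `q`, `a, b ≠ 0` and an anisotropic
vector `w ∈ V_a + V_b`, there exist two distinct pairs `(u, v) ∈ V_a × V_b` summing to `w`
iff there exists such a pair with `u, v` linearly independent. -/
theorem stmt_9 {F V : Type*} [Field F] [AddCommGroup V] [Module F V]
    (q : QuadraticForm F V) (hdim : Module.finrank F V = 2)
    (hnd : ∀ x : V, (∀ y : V, polar (⇑q) x y = 0) → x = 0)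
    (a b : F) (ha : a ≠ 0) (hb : b ≠ 0)
    (w : V) (hw : q w ≠ 0)
    (u v : V) (hu : q u = a) (hv : q v = b) (huv : u + v = w) :
    (∃ p₁ p₂ : V × V, p₁ ≠ p₂ ∧
        (q p₁.1 = a ∧ q p₁.2 = b ∧ p₁.1 + p₁.2 = w) ∧
        (q p₂.1 = a ∧ q p₂.2 = b ∧ p₂.1 + p₂.2 = w)) ↔
      (∃ u' v' : V, q u' = a ∧ q v' = b ∧ u' + v' = w ∧ LinearIndependent F ![u', v']) :=
  stmt_9_general q hdim hnd a b w hw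
end

section
/- Let F be a finite field with f elements and of characteristic ≠ 2, V a 2-dimensional F-vector space, q : V → F a non-degenerate quadratic form, and a ∈ F with a ≠ 0. Set k = f + 1 if q is anisotropic and k = f − 1 if q is isotropic. Then the sumset V_a + V_a = {u + v : q(u) = a, q(v) = a} has cardinality k²/2 + 1. -/
/-!
Diagonalise `q` as `α x² + β y²`; let `f = |F|` and `ε = χ(-αβ)`, `χ` the quadratic character.
For `w ≠ 0`, writing `w = u + v` with `q u = q v = a` amounts to finding `z = u - v` orthogonal
to `w` with `q w + q z = 4a`. The orthogonal line of `w` is spanned by `w⊥ = (-β w₂, α w₁)` and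
`q (s • w⊥) = s² α β q w`, so `w` lies in the sumset iff `q w · (1 + α β s²) = 4a` for some `s`.
The set `G` of such values `q w` is in bijection with the squares other than `-(αβ)⁻¹`, via
`d ↦ 4a / (1 + αβ d)`, so `2|G| = f - ε`; and every nonzero value of `q` is taken `f - ε` times
(a Jacobi sum computation). Hence `2 |V_a + V_a| = 2 + (f - ε)²`, and `ε = -1` exactly when `q`
is anisotropic.
-/

open QuadraticMap Module Finset

def levelSumset {V F : Type*} [Add V] (q : V → F) (a : F) : Set V :=
  {w | ∃ u v, q u = a ∧ q v = a ∧ w = u + v}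

lemma ncard_levelSumset_comp {V W F : Type*} [Add V] [Add W] (e : V ≃+ W) (q : W → F) (a : F) :
    (levelSumset (q ∘ e) a).ncard = (levelSumset q a).ncard := by
  have : levelSumset (q ∘ e) a = e ⁻¹' levelSumset q a := by
    ext w
    simp only [levelSumset, Set.mem_ofPred_eq, Set.mem_preimage, Function.comp_apply]
    constructor
    · rintro ⟨u, v, hu, hv, rfl⟩
      exact ⟨e u, e v, hu, hv, map_add e u v⟩
    · rintro ⟨u, v, hu, hv, huv⟩
      refine ⟨e.symm u, e.symm v, by simpa using hu, by simpa using hv, e.injective ?_⟩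
      simpa using huv
  rw [this, Set.ncard_preimage_of_injective_subset_range e.injective (by simp)]

lemma zero_mem_levelSumset {V F : Type*} [AddGroup V] {q : V → F} (hq : ∀ u, q (-u) = q u)
    {a : F} {u : V} (hu : q u = a) : 0 ∈ levelSumset q a :=
  ⟨u, -u, hu, (hq u).trans hu, (add_neg_cancel u).symm⟩

section BinaryDiagForm

variable {F : Type*} [Field F]

def binaryDiagForm (α β : F) (p : F × F) : F := α * p.1 ^ 2 + β * p.2 ^ 2

variable {α β : F}

lemma ne_zero_of_nondegenerate_comp {V : Type*} [AddCommGroup V] (e : V ≃+ F × F)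
    (hnd : ∀ x, (∀ y, polar (binaryDiagForm α β ∘ e) x y = 0) → x = 0) : α ≠ 0 ∧ β ≠ 0 := by
  have hpolar (x y : V) : polar (binaryDiagForm α β ∘ e) x y
      = 2 * (α * (e x).1 * (e y).1 + β * (e x).2 * (e y).2) := by
    simp only [polar, Function.comp_apply, map_add, binaryDiagForm, Prod.fst_add, Prod.snd_add]
    ring
  constructor
  · rintro rfl
    have := hnd (e.symm (1, 0)) fun y => by simp [hpolar]
    simpa using congrArg e this
  · rintro rfl
    have := hnd (e.symm (0, 1)) fun y => by simp [hpolar]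
    simpa using congrArg e this

lemma isSquare_neg_mul_iff_exists_binaryDiagForm_eq_zero (hα : α ≠ 0) :
    IsSquare (-(α * β)) ↔ ∃ p : F × F, p ≠ 0 ∧ binaryDiagForm α β p = 0 := by
  constructor
  · rintro ⟨r, hr⟩
    refine ⟨(r, α), fun h => hα (congrArg Prod.snd h), ?_⟩
    simp only [binaryDiagForm]
    linear_combination -α * hr
  · rintro ⟨⟨x, y⟩, hp, h⟩
    have hy : y ≠ 0 := by
      rintro rfl
      have : x = 0 := by simpa [binaryDiagForm, hα] using h
      exact hp (by simp [this])
    refine ⟨α * x / y, ?_⟩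
    simp only [binaryDiagForm] at h
    field_simp
    linear_combination -h

lemma exists_eq_smul_of_perp (hα : α ≠ 0) (hβ : β ≠ 0) {w z : F × F} (hw : w ≠ 0)
    (h : α * w.1 * z.1 + β * w.2 * z.2 = 0) : ∃ s : F, z = s • (-(β * w.2), α * w.1) := by
  obtain ⟨w1, w2⟩ := w
  obtain ⟨z1, z2⟩ := z
  simp only [Prod.smul_mk, smul_eq_mul, Prod.mk.injEq] at h ⊢
  rcases eq_or_ne w1 0 with rfl | hw1
  · have hw2 : w2 ≠ 0 := by rintro rfl; exact hw rfl
    have hz2 : z2 = 0 := by simpa [hβ, hw2] using h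
    exact ⟨-z1 / (β * w2), by field_simp, by simp [hz2]⟩
  · exact ⟨z2 / (α * w1), by field_simp; linear_combination h, by field_simp⟩

lemma mem_levelSumset_binaryDiagForm_iff (hF : ringChar F ≠ 2) (hα : α ≠ 0) (hβ : β ≠ 0)
    {a : F} {w : F × F} (hw : w ≠ 0) :
    w ∈ levelSumset (binaryDiagForm α β) a
      ↔ ∃ s, binaryDiagForm α β w * (1 + α * β * s ^ 2) = 4 * a := by
  have h2 : (2 : F) ≠ 0 := Ring.two_ne_zero hF
  constructor
  · rintro ⟨u, v, hu, hv, rfl⟩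
    obtain ⟨s, hs⟩ := exists_eq_smul_of_perp hα hβ hw (z := u - v) (by
      simp only [binaryDiagForm] at hu hv
      simp only [Prod.fst_add, Prod.snd_add, Prod.fst_sub, Prod.snd_sub]
      linear_combination hu - hv)
    refine ⟨s, ?_⟩
    have hs₁ := congrArg Prod.fst hs
    have hs₂ := congrArg Prod.snd hs
    simp only [binaryDiagForm, Prod.fst_add, Prod.snd_add, Prod.fst_sub, Prod.snd_sub,
      Prod.smul_fst, Prod.smul_snd, smul_eq_mul] at hu hv hs₁ hs₂ ⊢
    linear_combination 2 * hu + 2 * hv - α * (u.1 - v.1 - s * β * (u.2 + v.2)) * hs₁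
      - β * (u.2 - v.2 + s * α * (u.1 + v.1)) * hs₂
  · rintro ⟨s, hs⟩
    simp only [binaryDiagForm] at hs
    set z : F × F := s • (-(β * w.2), α * w.1)
    refine ⟨(2 : F)⁻¹ • (w + z), (2 : F)⁻¹ • (w - z), ?_, ?_, ?_⟩
    · simp only [binaryDiagForm, z, Prod.smul_fst, Prod.smul_snd, Prod.fst_add, Prod.snd_add,
        smul_eq_mul]
      field_simp
      linear_combination hs
    · simp only [binaryDiagForm, z, Prod.smul_fst, Prod.smul_snd, Prod.fst_sub, Prod.snd_sub,
        smul_eq_mul]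
      field_simp
      linear_combination hs
    · rw [← smul_add, add_add_sub_cancel, ← two_smul F w, smul_smul, inv_mul_cancel₀ h2, one_smul]

end BinaryDiagForm

section CharacterSums

variable {F : Type*} [Field F] [Fintype F] [DecidableEq F]

local notation "χ" => quadraticChar F

lemma sum_comp_sq_eq (hF : ringChar F ≠ 2) (g : F → ℤ) :
    ∑ x : F, g (x ^ 2) = ∑ u : F, (χ u + 1) * g u := by
  rw [← Finset.sum_fiberwise univ (· ^ 2) fun x => g (x ^ 2)]
  refine sum_congr rfl fun u _ => ?_
  rw [sum_congr rfl fun x hx => by rw [(mem_filter.1 hx).2], sum_const, nsmul_eq_mul,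
    ← quadraticChar_card_sqrts hF u, Set.toFinset_ofPred]

lemma sum_quadraticChar_sq_sub (hF : ringChar F ≠ 2) {b : F} (hb : b ≠ 0) :
    ∑ x : F, χ (x ^ 2 - b) = -1 := by
  have hshift : ∑ u : F, χ (u - b) = 0 :=
    ((Equiv.subRight b).sum_comp χ).trans (quadraticChar_sum_zero hF)
  have hjacobi : jacobiSum χ χ = -χ (-1) := by
    simpa only [(quadraticChar_isQuadratic F).inv] using
      jacobiSum_nontrivial_inv (quadraticChar_ne_one hF)
  have hprod : ∑ u : F, χ u * χ (u - b) = -1 :=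
    calc ∑ u : F, χ u * χ (u - b) = ∑ s : F, χ (b * s) * χ (b * s - b) :=
          (Fintype.sum_bijective _ (mulLeft_bijective₀ b hb) _ _ fun _ => rfl).symm
      _ = ∑ s : F, χ (-1) * (χ s * χ (1 - s)) := by
          refine sum_congr rfl fun s _ => ?_
          rw [← map_mul, ← map_mul, ← map_mul,
            show b * s * (b * s - b) = b ^ 2 * (-1 * (s * (1 - s))) by ring,
            map_mul, quadraticChar_sq_one' hb, one_mul]
      _ = -χ (-1) ^ 2 := by rw [← mul_sum, ← jacobiSum, hjacobi]; ring
      _ = -1 := by rw [quadraticChar_sq_one (neg_ne_zero.2 one_ne_zero)]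
  rw [sum_comp_sq_eq hF (fun u => χ (u - b))]
  simp only [add_mul, one_mul, sum_add_distrib, hshift, hprod, add_zero]

lemma card_filter_prod {α β : Type*} [Fintype α] [Fintype β] (P : α × β → Prop)
    [DecidablePred P] : #{p | P p} = ∑ x, #{y | P (x, y)} := by
  simp only [card_filter]
  exact Fintype.sum_prod_type _

lemma card_binaryDiagForm_eq (hF : ringChar F ≠ 2) {α β c : F} (hα : α ≠ 0) (hβ : β ≠ 0)
    (hc : c ≠ 0) :
    (#{p : F × F | binaryDiagForm α β p = c} : ℤ) = Fintype.card F - χ (-(α * β)) := by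
  have hfiber (x : F) :
      (#{y : F | binaryDiagForm α β (x, y) = c} : ℤ) = χ β * χ (c - α * x ^ 2) + 1 := by
    have hinv : χ β = χ β⁻¹ := by rw [← MulChar.inv_apply', (quadraticChar_isQuadratic F).inv]
    rw [hinv, ← map_mul, inv_mul_eq_div, ← quadraticChar_card_sqrts hF, Set.toFinset_ofPred]
    congr 3; ext y
    rw [binaryDiagForm, eq_div_iff hβ]
    constructor <;> intro h <;> linear_combination h
  have hsum : ∑ x : F, χ (c - α * x ^ 2) = -χ (-α) := by
    rw [← mul_neg_one, ← sum_quadraticChar_sq_sub hF (div_ne_zero hc hα), mul_sum]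
    refine sum_congr rfl fun x _ => ?_
    rw [← map_mul]
    congr 1
    field_simp
    ring
  rw [card_filter_prod, Nat.cast_sum, sum_congr rfl fun x _ => hfiber x, sum_add_distrib,
    ← mul_sum, hsum, sum_const, card_univ, nsmul_one, show -(α * β) = β * -α by ring, map_mul]
  ring

lemma two_mul_card_isSquare (hF : ringChar F ≠ 2) :
    2 * #{d : F | IsSquare d} = Fintype.card F + 1 := by
  have hpoint (d : F) : (if IsSquare d then 2 else 0 : ℤ) = χ d + 1 + if d = 0 then 1 else 0 := by
    rcases eq_or_ne d 0 with rfl | hd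
    · simp
    by_cases hsq : IsSquare d
    · simp [hsq, hd, (quadraticChar_one_iff_isSquare hd).2 hsq]
    · simp [hsq, hd, quadraticChar_neg_one_iff_not_isSquare.2 hsq]
  have : (2 * #{d : F | IsSquare d} : ℤ) = Fintype.card F + 1 := by
    rw [card_filter, Nat.cast_sum, mul_sum]
    simp only [Nat.cast_ite, Nat.cast_one, Nat.cast_zero, mul_ite, mul_one, mul_zero, hpoint,
      sum_add_distrib, quadraticChar_sum_zero hF, sum_ite_eq', mem_univ, if_true, sum_const,
      card_univ, nsmul_one, zero_add]
  exact_mod_cast this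

lemma two_mul_card_exists_mul_one_add_sq_eq (hF : ringChar F ≠ 2) {γ e : F} (hγ : γ ≠ 0)
    (he : e ≠ 0) :
    (2 * #{c : F | ∃ s, c * (1 + γ * s ^ 2) = e} : ℤ) = Fintype.card F - χ (-γ) := by
  have hpole (d : F) : 1 + γ * d ≠ 0 ↔ d ≠ -γ⁻¹ := by
    refine not_congr ⟨fun h => ?_, fun h => ?_⟩
    · field_simp; linear_combination h
    · rw [h]; field_simp; ring
  set D := ({d : F | IsSquare d} : Finset F).erase (-γ⁻¹)
  have hG : ({c : F | ∃ s, c * (1 + γ * s ^ 2) = e} : Finset F)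
      = D.image fun d => e / (1 + γ * d) := by
    ext c
    simp only [D, mem_filter, mem_univ, true_and, mem_image, mem_erase, ← hpole]
    constructor
    · rintro ⟨s, hs⟩
      have hs0 : 1 + γ * s ^ 2 ≠ 0 := by rintro h; rw [h, mul_zero] at hs; exact he hs.symm
      exact ⟨s ^ 2, ⟨hs0, IsSquare.sq s⟩, by rw [div_eq_iff hs0, hs]⟩
    · rintro ⟨d, ⟨hd0, r, rfl⟩, rfl⟩
      exact ⟨r, by rw [div_mul_eq_mul_div, pow_two, mul_div_assoc, div_self hd0, mul_one]⟩
  have hinj : Set.InjOn (fun d => e / (1 + γ * d)) D := by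
    intro d₁ hd₁ d₂ hd₂ h
    simp only [D, coe_erase, Set.mem_sdiff, Set.mem_singleton_iff] at hd₁ hd₂
    have h' := mul_left_cancel₀ he ((div_eq_div_iff ((hpole d₁).2 hd₁.2) ((hpole d₂).2 hd₂.2)).1 h)
    exact mul_left_cancel₀ hγ (by linear_combination -h')
  rw [hG, card_image_of_injOn hinj]
  have hsq := two_mul_card_isSquare hF (F := F)
  rcases quadraticChar_dichotomy (neg_ne_zero.2 hγ) with h | h
  · have hmem : -γ⁻¹ ∈ ({d : F | IsSquare d} : Finset F) := by
      rw [mem_filter_univ, ← inv_neg, isSquare_inv]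
      exact (quadraticChar_one_iff_isSquare (neg_ne_zero.2 hγ)).1 h
    rw [card_erase_of_mem hmem, h, Nat.cast_sub (card_pos.2 ⟨_, hmem⟩)]
    push_cast
    linarith
  · have hmem : -γ⁻¹ ∉ ({d : F | IsSquare d} : Finset F) := by
      rw [mem_filter_univ, ← inv_neg, isSquare_inv]
      exact quadraticChar_neg_one_iff_not_isSquare.1 h
    rw [show D = ({d : F | IsSquare d} : Finset F) from erase_eq_of_notMem hmem, h]
    linarith

theorem two_mul_ncard_levelSumset_binaryDiagForm (hF : ringChar F ≠ 2) {α β a : F}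
    (hα : α ≠ 0) (hβ : β ≠ 0) (ha : a ≠ 0) :
    (2 * (levelSumset (binaryDiagForm α β) a).ncard : ℤ)
      = (Fintype.card F - χ (-(α * β))) ^ 2 + 2 := by
  set Q := binaryDiagForm α β
  set N : ℤ := Fintype.card F - χ (-(α * β))
  have h4a : 4 * a ≠ 0 :=
    mul_ne_zero (by simpa [show (4 : F) = 2 ^ 2 by norm_num] using Ring.two_ne_zero hF) ha
  set G : Finset F := {c | ∃ s, c * (1 + α * β * s ^ 2) = 4 * a}
  have hG0 : (0 : F) ∉ G := by simpa [G] using h4a.symm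
  have hfiber (c : F) (hc : c ∈ G) : (#{p | Q p = c} : ℤ) = N :=
    card_binaryDiagForm_eq hF hα hβ (ne_of_mem_of_not_mem hc hG0)
  have hlevel : ∃ u, Q u = a := by
    have hpos : (0 : ℤ) < #{p | Q p = a} := by
      rw [card_binaryDiagForm_eq hF hα hβ ha]
      have := Fintype.one_lt_card (α := F)
      rcases quadraticChar_dichotomy (neg_ne_zero.2 (mul_ne_zero hα hβ)) with h | h <;>
        · rw [h]; omega
    obtain ⟨u, hu⟩ := card_pos.1 (Nat.cast_pos.1 hpos)
    exact ⟨u, (mem_filter.1 hu).2⟩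
  have hS : levelSumset Q a = ↑(insert 0 ({w | Q w ∈ G} : Finset (F × F))) := by
    ext w
    rcases eq_or_ne w 0 with rfl | hw
    · obtain ⟨u, hu⟩ := hlevel
      simpa using zero_mem_levelSumset (fun u => by simp [Q, binaryDiagForm]) hu
    · rw [mem_levelSumset_binaryDiagForm_iff hF hα hβ hw]
      simp [hw, G, Q]
  have h0 : (0 : F × F) ∉ ({w | Q w ∈ G} : Finset (F × F)) := by
    simpa [Q, binaryDiagForm] using hG0
  rw [hS, Set.ncard_coe_finset, card_insert_of_notMem h0, ← sum_card_fiberwise_eq_card_filter,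
    Nat.cast_add, Nat.cast_sum, sum_congr rfl hfiber, sum_const, nsmul_eq_mul]
  have hGcard := two_mul_card_exists_mul_one_add_sq_eq hF (mul_ne_zero hα hβ) h4a
  linear_combination N * hGcard

end CharacterSums

lemma QuadraticForm.exists_linearEquiv_binaryDiagForm {F V : Type*} [Field F]
    [Invertible (2 : F)] [AddCommGroup V] [Module F V] (q : QuadraticForm F V)
    (hdim : finrank F V = 2) :
    ∃ (α β : F) (Φ : V ≃ₗ[F] F × F), ∀ x, q x = binaryDiagForm α β (Φ x) := by
  have := Module.finite_of_finrank_eq_succ hdim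
  obtain ⟨w, ⟨e⟩⟩ := q.equivalent_weightedSumSquares
  let σ := (finCongr hdim).symm
  refine ⟨w (σ 0), w (σ 1),
    e.toLinearEquiv ≪≫ₗ LinearEquiv.funCongrLeft F F σ ≪≫ₗ LinearEquiv.finTwoArrow F F,
    fun x => ?_⟩
  rw [← e.map_app x, weightedSumSquares_apply, ← σ.sum_comp, Fin.sum_univ_two]
  simp [binaryDiagForm, LinearEquiv.finTwoArrow, LinearEquiv.funCongrLeft, _root_.sq]

/-- Over a finite field of odd characteristic with `f` elements, for a 2-dimensional
non-degenerate quadratic form `q` and `a ≠ 0`, the sumset `V_a + V_a` has cardinality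
`k²/2 + 1` where `k = f + 1` if `q` is anisotropic and `k = f - 1` if `q` is isotropic. -/
theorem stmt_10 {F V : Type*} [Field F] [Fintype F] (hchar : ringChar F ≠ 2)
    [AddCommGroup V] [Module F V]
    (q : QuadraticForm F V) (hdim : Module.finrank F V = 2)
    (hnd : ∀ x : V, (∀ y : V, polar (⇑q) x y = 0) → x = 0)
    (a : F) (ha : a ≠ 0) :
    ((∀ v : V, q v = 0 → v = 0) →
      Set.ncard {w : V | ∃ u v : V, q u = a ∧ q v = a ∧ w = u + v} =
        (Fintype.card F + 1) ^ 2 / 2 + 1) ∧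
    ((∃ v : V, v ≠ 0 ∧ q v = 0) →
      Set.ncard {w : V | ∃ u v : V, q u = a ∧ q v = a ∧ w = u + v} =
        (Fintype.card F - 1) ^ 2 / 2 + 1) := by
  classical
  have : Invertible (2 : F) := invertibleOfNonzero (Ring.two_ne_zero hchar)
  obtain ⟨α, β, Φ, hΦ⟩ := q.exists_linearEquiv_binaryDiagForm hdim
  have hq : ⇑q = binaryDiagForm α β ∘ Φ.toAddEquiv := funext hΦ
  obtain ⟨hα, hβ⟩ := ne_zero_of_nondegenerate_comp Φ.toAddEquiv (hq ▸ hnd)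
  have hiso : (∃ v : V, v ≠ 0 ∧ q v = 0) ↔ IsSquare (-(α * β)) := by
    rw [isSquare_neg_mul_iff_exists_binaryDiagForm_eq_zero hα, hq]
    exact Φ.toEquiv.exists_congr_left.trans (by simp)
  have hcard := two_mul_ncard_levelSumset_binaryDiagForm hchar hα hβ ha
  rw [← ncard_levelSumset_comp Φ.toAddEquiv, ← hq] at hcard
  change (_ → (levelSumset q a).ncard = _) ∧ (_ → (levelSumset q a).ncard = _)
  refine ⟨fun haniso => ?_, fun hisot => ?_⟩
  · have hnsq : ¬IsSquare (-(α * β)) := hiso.not.1 fun ⟨v, hv, h⟩ => hv (haniso v h)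
    rw [quadraticChar_neg_one_iff_not_isSquare.2 hnsq] at hcard
    have : 2 * (levelSumset q a).ncard = (Fintype.card F + 1) ^ 2 + 2 := by
      zify
      linear_combination hcard
    omega
  · rw [(quadraticChar_one_iff_isSquare (neg_ne_zero.2 (mul_ne_zero hα hβ))).2 (hiso.1 hisot)]
      at hcard
    have : 2 * (levelSumset q a).ncard = (Fintype.card F - 1) ^ 2 + 2 := by
      have := Fintype.card_pos (α := F)
      zify [this]
      linear_combination hcard
    omega
end

section
/- Let F be a field of characteristic ≠ 2, V a 2-dimensional F-vector space, and q : V → F a non-degenerate quadratic form that represents 1 (i.e. q(v₀) = 1 for some v₀ ∈ V). Fix a basis of V and let d ∈ F∗ be the determinant of the Gram matrix of the symmetric bilinear form (1/2)·b_q in that basis. Then for a ∈ F with a ≠ 0, there exist u, v ∈ V with q(u) = 1, q(v) = 1 and q(u + v) = a if and only if d·(4a − a²) is a square in F. -/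
open QuadraticMap Module

/-!
The Gram determinant of `b_q` on a family `w` equals `det(P)² · 4d`, where `P` is the matrix of
`w` in the fixed basis; this holds for every family, not only for bases. If `q u = q v = 1` and
`q (u + v) = a`, the Gram determinant of `(u, v)` is `4 - (a - 2)² = 4a - a²`, so `d (4a - a²)`
is a square. Conversely, take `q x = 1` and `y ≠ 0` orthogonal to `x`. Non-degeneracy forces
`e = q y ≠ 0`, and `e = det(P)² d`, so `e (4a - a²) = r²` for some `r`; then
`v = ((a - 2) / 2) x + (r / 2e) y` satisfies `q v = 1` and
`q (x + v) = (1 + (a - 2) / 2)² + 1 - ((a - 2) / 2)² = a`.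
-/

open scoped Matrix

open LinearMap (BilinForm)

namespace LinearMap.BilinForm

variable {R M ι : Type*} [CommRing R] [AddCommGroup M] [Module R M]

def gram (B : BilinForm R M) (w : ι → M) : Matrix ι ι R :=
  Matrix.of fun i j => B (w i) (w j)

variable [Fintype ι] [DecidableEq ι]

theorem gram_eq_transpose_mul_toMatrix_mul (B : BilinForm R M) (b : Basis ι R M) (w : ι → M) :
    B.gram w = (b.toMatrix w)ᵀ * toMatrix b B * b.toMatrix w := by
  rw [b.toMatrix_eq_toMatrix_constr, ← toMatrix_comp]
  ext i j
  simp [gram, toMatrix_apply]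

theorem det_gram_eq_sq_mul (B : BilinForm R M) (b : Basis ι R M) (w : ι → M) :
    (B.gram w).det = (b.toMatrix w).det ^ 2 * (B.gram b).det := by
  have hb : B.gram b = toMatrix b B := by ext i j; simp [gram, toMatrix_apply]
  rw [gram_eq_transpose_mul_toMatrix_mul B b, hb, Matrix.det_mul, Matrix.det_mul,
    Matrix.det_transpose]
  ring

end LinearMap.BilinForm

namespace QuadraticMap

section CommRing

variable {R M : Type*} [CommRing R] [AddCommGroup M] [Module R M] (q : QuadraticForm R M)

theorem det_gram_polarBilin_pair (u v : M) :
    (BilinForm.gram q.polarBilin ![u, v]).det = 4 * q u * q v - polar q u v ^ 2 := by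
  simp [BilinForm.gram, Matrix.det_fin_two, polar_self, polar_comm q v u]
  ring

theorem map_smul_add_smul_of_polar_eq_zero {x y : M} (hxy : polar q x y = 0) (s t : R) :
    q (s • x + t • y) = s ^ 2 * q x + t ^ 2 * q y := by
  have h : polar q (s • x) (t • y) = 0 := by simp [polar_smul_left, polar_smul_right, hxy]
  rw [polar, q.map_smul, q.map_smul, smul_eq_mul, smul_eq_mul] at h
  linear_combination h

end CommRing

variable {F V : Type*} [Field F] [AddCommGroup V] [Module F V] (q : QuadraticForm F V)

theorem det_gram_polarBilin {ι : Type*} [Fintype ι] [DecidableEq ι] (h2 : (2 : F) ≠ 0)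
    (w : ι → V) :
    (BilinForm.gram q.polarBilin w).det
      = 2 ^ Fintype.card ι * (Matrix.of fun i j => (1 / 2 : F) * polar q (w i) (w j)).det := by
  have hhalf : (Matrix.of fun i j => (1 / 2 : F) * polar q (w i) (w j))
      = (1 / 2 : F) • BilinForm.gram q.polarBilin w := by
    ext i j; simp [BilinForm.gram]
  rw [hhalf, Matrix.det_smul, ← mul_assoc, ← mul_pow]
  simp [h2]

theorem exists_ne_zero_polar_eq_zero (hV : finrank F V = 2) (x : V) :
    ∃ y ≠ 0, polar q x y = 0 := by
  have := Module.finite_of_finrank_eq_succ hV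
  have hker : LinearMap.ker (q.polarBilin x) ≠ ⊥ :=
    LinearMap.ker_ne_bot_of_finrank_lt (by simp [hV])
  obtain ⟨y, hy, hy0⟩ := (Submodule.ne_bot_iff _).mp hker
  exact ⟨y, hy0, hy⟩

theorem apply_ne_zero_of_polar_eq_zero (hnd : ∀ x : V, (∀ y : V, polar q x y = 0) → x = 0)
    (hV : finrank F V = 2) {x y : V} (hx : polar q x x ≠ 0) (hxy : polar q x y = 0)
    (hy : y ≠ 0) : q y ≠ 0 := by
  intro hqy
  have hli : LinearIndependent F ![x, y] := by
    refine LinearIndependent.pair_iff.mpr fun s t hst => ?_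
    have hs : s * polar q x x = 0 := by
      simpa only [polar_add_right, polar_smul_right, hxy, polar_zero_right, smul_zero, mul_zero,
        add_zero, smul_eq_mul] using congrArg (polar q x) hst
    have hs0 : s = 0 := (mul_eq_zero.mp hs).resolve_right hx
    subst hs0
    exact ⟨rfl, (smul_eq_zero.mp (by simpa using hst)).resolve_right hy⟩
  -- `x, y` span `V`, and an isotropic `y` would be orthogonal to both.
  let b := basisOfLinearIndependentOfCardEqFinrank hli (by simp [hV])
  have hpolar : q.polarBilin y = 0 := b.ext fun i => by
    fin_cases i <;> simp [b, polar_comm q y x, hxy, polar_self, hqy]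
  exact hy (hnd y fun z => LinearMap.congr_fun hpolar z)

theorem exists_apply_eq_one_apply_add_eq (h2 : (2 : F) ≠ 0) {x y : V} (hx : q x = 1)
    (hxy : polar q x y = 0) (hy : q y ≠ 0) {a : F} (ha : IsSquare (q y * (4 * a - a ^ 2))) :
    ∃ v, q v = 1 ∧ q (x + v) = a := by
  obtain ⟨r, hr⟩ := ha
  have hrw : ∀ s t : F, x + (s • x + t • y) = (1 + s) • x + t • y := fun s t => by module
  refine ⟨((a - 2) / 2) • x + (r / (2 * q y)) • y, ?_, ?_⟩
  · rw [map_smul_add_smul_of_polar_eq_zero q hxy, hx]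
    field_simp
    linear_combination -hr
  · rw [hrw, map_smul_add_smul_of_polar_eq_zero q hxy, hx]
    field_simp
    linear_combination -hr

end QuadraticMap

theorem stmt_11_general {F V : Type*} [Field F] (hchar : ringChar F ≠ 2)
    [AddCommGroup V] [Module F V]
    (q : QuadraticForm F V)
    (hnd : ∀ x : V, (∀ y : V, polar (⇑q) x y = 0) → x = 0)
    (bV : Basis (Fin 2) F V)
    (hrep : ∃ v₀ : V, q v₀ = 1)
    (d : F) (hd : d = (Matrix.of fun i j => (1 / 2 : F) * polar (⇑q) (bV i) (bV j)).det)
    (a : F) :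
    (∃ u v : V, q u = 1 ∧ q v = 1 ∧ q (u + v) = a) ↔ IsSquare (d * (4 * a - a ^ 2)) := by
  have h2 : (2 : F) ≠ 0 := Ring.two_ne_zero hchar
  have h4 : (4 : F) ≠ 0 := by
    rw [show (4 : F) = 2 * 2 by norm_num]; exact mul_ne_zero h2 h2
  have hV : finrank F V = 2 := by simp [finrank_eq_card_basis bV]
  have hchange (w : Fin 2 → V) :
      (BilinForm.gram q.polarBilin w).det = (bV.toMatrix w).det ^ 2 * (4 * d) := by
    rw [BilinForm.det_gram_eq_sq_mul _ bV, det_gram_polarBilin q h2, hd]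
    norm_num
  constructor
  · rintro ⟨u, v, hu, hv, huv⟩
    have hpolar : polar q u v = a - 2 := by rw [polar, huv, hu, hv]; ring
    have h := hchange ![u, v]
    rw [det_gram_polarBilin_pair, hu, hv, hpolar] at h
    exact ⟨2 * (bV.toMatrix ![u, v]).det * d, by linear_combination d * h⟩
  · rintro ⟨s, hs⟩
    obtain ⟨x, hx⟩ := hrep
    obtain ⟨y, hy0, hxy⟩ := exists_ne_zero_polar_eq_zero q hV x
    have hxx : polar q x x ≠ 0 := by simpa [polar_self, hx] using h2
    have hy := apply_ne_zero_of_polar_eq_zero q hnd hV hxx hxy hy0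
    set p := (bV.toMatrix ![x, y]).det
    have hqy : q y = p ^ 2 * d := by
      have h := hchange ![x, y]
      rw [det_gram_polarBilin_pair, hx, hxy] at h
      exact mul_left_cancel₀ h4 (by linear_combination h)
    obtain ⟨v, hv, hxv⟩ := exists_apply_eq_one_apply_add_eq q h2 hx hxy hy (a := a)
      ⟨p * s, by linear_combination (4 * a - a ^ 2) * hqy + p ^ 2 * hs⟩
    exact ⟨x, v, hx, hv, hxv⟩

/-- Let `q` be a 2-dimensional non-degenerate quadratic form over a field of characteristic
`≠ 2` representing `1`, with determinant `d` (the determinant of the Gram matrix of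
`(1/2)·b_q` in a fixed basis). For `a ≠ 0` there exist `u, v` with `q u = q v = 1` and
`q (u + v) = a` iff `d * (4a - a²)` is a square. -/
theorem stmt_11 {F V : Type*} [Field F] (hchar : ringChar F ≠ 2)
    [AddCommGroup V] [Module F V]
    (q : QuadraticForm F V)
    (hnd : ∀ x : V, (∀ y : V, polar (⇑q) x y = 0) → x = 0)
    (bV : Basis (Fin 2) F V)
    (hrep : ∃ v₀ : V, q v₀ = 1)
    (d : F) (hd : d = (Matrix.of fun i j => (1 / 2 : F) * polar (⇑q) (bV i) (bV j)).det)
    (a : F) (ha : a ≠ 0) :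
    (∃ u v : V, q u = 1 ∧ q v = 1 ∧ q (u + v) = a) ↔ IsSquare (d * (4 * a - a ^ 2)) :=
  stmt_11_general hchar q hnd bV hrep d hd a
end

section
/- Let F be a finite field, V a finite-dimensional F-vector space of dimension at least 3, q : V → F a non-degenerate quadratic form, and a ∈ F with a ≠ 0. Then the girth of the representation graph G_{q,a} equals 3. -/
/-!
Over a finite field a form of dimension at least 3 is isotropic (Chevalley–Warning), so by
non-degeneracy `V` contains a hyperbolic pair `v, w` and, orthogonal to both, a vector `u` with
`e := q u ≠ 0`. In these coordinates `q (s • v + t • w + r • u) = s * t + e * r ^ 2`, and with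
`x = v + a • w`, `y = s • v + (a * (1 - s)) • w + r • u` the triangle `0, x, y` lies in `G_{q,a}`
as soon as `e * r ^ 2 = a * (s ^ 2 - s + 1)`, an equation that is solvable over every finite field.
-/

open QuadraticMap Module

namespace QuadraticMap

theorem exists_mvPolynomial_eval_eq {R M ι : Type*} [CommRing R] [AddCommGroup M] [Module R M]
    [Fintype ι] (Q : QuadraticForm R M) (b : Basis ι R M) :
    ∃ f : MvPolynomial ι R, f.IsHomogeneous 2 ∧
      ∀ x : ι → R, MvPolynomial.eval x f = Q (∑ i, x i • b i) := by
  have := Module.Free.of_basis b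
  obtain ⟨B, rfl⟩ := LinearMap.BilinMap.toQuadraticMap_surjective Q
  open MvPolynomial in
  refine ⟨∑ i, ∑ j, C (B (b i) (b j)) * (X i * X j), ?_, fun x => ?_⟩
  · exact .sum _ _ _ fun i _ => .sum _ _ _ fun j _ =>
      ((isHomogeneous_X R i).mul (isHomogeneous_X R j)).C_mul _
  · simp only [LinearMap.BilinMap.toQuadraticMap_apply, map_sum, LinearMap.sum_apply, map_smul,
      LinearMap.smul_apply, smul_eq_mul, eval_mul, eval_C, eval_X, Finset.mul_sum]
    rw [Finset.sum_comm]
    exact Finset.sum_congr rfl fun i _ => Finset.sum_congr rfl fun j _ => by ring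

end QuadraticMap

namespace QuadraticForm

variable {F V : Type*} [Field F] [AddCommGroup V] [Module F V] (q : QuadraticForm F V)

theorem not_anisotropic_of_two_lt_finrank [Fintype F] [FiniteDimensional F V]
    (hdim : 2 < finrank F V) : ¬ q.Anisotropic := by
  classical
  let b := Module.finBasis F V
  obtain ⟨f, hdeg, hf⟩ := q.exists_mvPolynomial_eval_eq b
  have hp := CharP.char_is_prime F (ringChar F)
  have hzero : MvPolynomial.eval 0 f = 0 := by rw [hf]; simp
  have hcard : 1 < Fintype.card {x : Fin (finrank F V) → F // MvPolynomial.eval x f = 0} :=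
    hp.one_lt.trans_le <| Nat.le_of_dvd (Fintype.card_pos_iff.mpr ⟨⟨0, hzero⟩⟩) <|
      char_dvd_card_solutions _ <| by
        rw [Fintype.card_fin]; exact hdeg.totalDegree_le.trans_lt hdim
  obtain ⟨⟨x, hx⟩, hx0⟩ := Fintype.exists_ne_of_one_lt_card hcard ⟨0, hzero⟩
  rw [not_anisotropic_iff_exists]
  refine ⟨∑ i, x i • b i, fun h => hx0 ?_, by rw [← hf, hx]⟩
  ext i
  exact Fintype.linearIndependent_iff.mp b.linearIndependent x h i

theorem exists_isotropic_polar_eq_one {v w₀ : V} (hv : q v = 0) (hvw₀ : polar q v w₀ ≠ 0) :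
    ∃ w, q w = 0 ∧ polar q v w = 1 := by
  obtain ⟨w₁, hvw₁⟩ : ∃ w₁, polar q v w₁ = 1 :=
    ⟨(polar q v w₀)⁻¹ • w₀, by rw [polar_smul_right, smul_eq_mul, inv_mul_cancel₀ hvw₀]⟩
  refine ⟨w₁ - q w₁ • v, ?_, ?_⟩
  · rw [sub_eq_add_neg, ← neg_smul, QuadraticMap.map_add q, QuadraticMap.map_smul,
      polar_smul_right, polar_comm, hvw₁, hv]
    simp
  · rw [polar_sub_right, polar_smul_right, polar_self, hvw₁, hv]
    simp

theorem exists_orthogonal_map_ne_zero [FiniteDimensional F V] (hdim : 2 < finrank F V)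
    (hnd : ∀ x : V, (∀ y : V, polar q x y = 0) → x = 0)
    {v w : V} (hv : q v = 0) (hw : q w = 0) (hvw : polar q v w = 1) :
    ∃ u, polar q v u = 0 ∧ polar q w u = 0 ∧ q u ≠ 0 := by
  -- `P` projects onto the orthogonal complement of `span {v, w}`; were `q` zero on its range,
  -- that range would lie in the radical of `polar q`.
  let P : V →ₗ[F] V :=
    LinearMap.id - (polarBilin q w).smulRight v - (polarBilin q v).smulRight w
  have hP : ∀ x, x = P x + (polar q w x • v + polar q v x • w) := fun x => by
    simp [P]
  have hPv : ∀ x, polar q v (P x) = 0 := fun x => by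
    simp [P, polar_sub_right, polar_smul_right, polar_self, hv, hvw]
  have hPw : ∀ x, polar q w (P x) = 0 := fun x => by
    simp [P, polar_sub_right, polar_smul_right, polar_self, hw, polar_comm q w v, hvw]
  have hP0 : P ≠ 0 := by
    intro hP0
    have hspan : Submodule.span F (Set.range ![v, w]) = ⊤ := by
      refine Submodule.eq_top_iff'.mpr fun x => ?_
      rw [hP x, hP0, LinearMap.zero_apply, zero_add]
      exact add_mem (Submodule.smul_mem _ _ (Submodule.subset_span ⟨0, rfl⟩))
        (Submodule.smul_mem _ _ (Submodule.subset_span ⟨1, rfl⟩))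
    have := finrank_range_le_card (R := F) ![v, w]
    rw [Set.finrank, hspan, finrank_top, Fintype.card_fin] at this
    omega
  by_contra! hq
  have hPP : ∀ x y, polar q (P x) (P y) = 0 := fun x y => by
    rw [polar, ← map_add, hq _ (hPv _) (hPw _), hq _ (hPv _) (hPw _), hq _ (hPv _) (hPw _)]
    simp
  refine hP0 (LinearMap.ext fun x => hnd _ fun y => ?_)
  rw [hP y, polar_add_right, polar_add_right, polar_smul_right, polar_smul_right, hPP,
    polar_comm _ _ v, hPv, polar_comm _ _ w, hPw]
  simp

theorem map_smul_add_smul_add_smul {v w u : V} (hv : q v = 0) (hw : q w = 0)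
    (hvw : polar q v w = 1) (hvu : polar q v u = 0) (hwu : polar q w u = 0) (s t r : F) :
    q (s • v + t • w + r • u) = s * t + q u * r ^ 2 := by
  simp only [QuadraticMap.map_add q, QuadraticMap.map_smul, polar_add_left, polar_smul_left,
    polar_smul_right, hv, hw, hvw, hvu, hwu, smul_eq_mul]
  ring

end QuadraticForm

open Polynomial in
theorem FiniteField.exists_mul_sq_eq_mul_sq_sub_add_one {F : Type*} [Field F] [Fintype F]
    {e a : F} (he : e ≠ 0) (ha : a ≠ 0) : ∃ r s : F, e * r ^ 2 = a * (s ^ 2 - s + 1) := by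
  rcases Nat.mod_two_eq_zero_or_one (Fintype.card F) with hF | hF
  · obtain ⟨r, hr⟩ := isSquare_of_char_two (even_card_iff_char_two.mpr hF) (a / e)
    exact ⟨r, 0, by rw [pow_two, ← hr, mul_div_cancel₀ _ he]; ring⟩
  · obtain ⟨r, s, h⟩ := exists_root_sum_quadratic (f := -(C e * X ^ 2))
      (g := C a * (X ^ 2 - X + 1)) (by compute_degree!)
      (by rw [degree_C_mul ha]; compute_degree!) hF
    simp only [eval_mul, eval_neg, eval_C, eval_pow, eval_X, eval_add, eval_sub, eval_one] at h
    exact ⟨r, s, by linear_combination -h⟩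

theorem SimpleGraph.egirth_eq_three_of_adj {α : Type*} {G : SimpleGraph α} {x y z : α}
    (hxy : G.Adj x y) (hyz : G.Adj y z) (hzx : G.Adj z x) : G.egirth = 3 := by
  refine le_antisymm ?_ G.three_le_egirth
  let c : G.Walk x x := .cons hxy (.cons hyz (.cons hzx .nil))
  have hc : c.IsCycle := by
    simp [c, Walk.isCycle_def, Walk.isTrail_def, hxy.ne, hyz.ne, hzx.ne, hxy.ne', hzx.ne']
  exact G.egirth_le_length hc

theorem repGraph_egirth_eq_three {F V : Type*} [Field F] [AddCommGroup V] [Module F V]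
    (q : QuadraticForm F V) {a : F} (ha : a ≠ 0) {x y : V}
    (hx : q x = a) (hy : q y = a) (hxy : q (x - y) = a) : (repGraph q a).egirth = 3 := by
  have hne : ∀ z, q z = a → z ≠ 0 := fun z hz h => ha (by rw [← hz, h, map_zero])
  refine SimpleGraph.egirth_eq_three_of_adj (x := 0) (y := x) (z := y)
    ⟨(hne x hx).symm, by rwa [zero_sub, QuadraticMap.map_neg]⟩
    ⟨sub_ne_zero.mp (hne _ hxy), hxy⟩ ⟨hne y hy, by rwa [sub_zero]⟩

/-- Over a finite field, a non-degenerate quadratic form of dimension at least `3` and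
`a ≠ 0` yield girth `3` for the representation graph `G_{q,a}`. -/
theorem stmt_17 {F V : Type*} [Field F] [Fintype F]
    [AddCommGroup V] [Module F V] [FiniteDimensional F V]
    (q : QuadraticForm F V) (hdim : 3 ≤ Module.finrank F V)
    (hnd : ∀ x : V, (∀ y : V, polar (⇑q) x y = 0) → x = 0)
    (a : F) (ha : a ≠ 0) :
    (repGraph q a).egirth = 3 := by
  obtain ⟨v, hv0, hv⟩ :=
    (not_anisotropic_iff_exists q).mp (q.not_anisotropic_of_two_lt_finrank hdim)
  obtain ⟨w₀, hvw₀⟩ := not_forall.mp (mt (hnd v) hv0)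
  obtain ⟨w, hw, hvw⟩ := q.exists_isotropic_polar_eq_one hv hvw₀
  obtain ⟨u, hvu, hwu, hu⟩ := q.exists_orthogonal_map_ne_zero hdim hnd hv hw hvw
  obtain ⟨r, s, hrs⟩ := FiniteField.exists_mul_sq_eq_mul_sq_sub_add_one hu ha
  have hq := q.map_smul_add_smul_add_smul hv hw hvw hvu hwu
  refine repGraph_egirth_eq_three q ha (x := (1 : F) • v + a • w + (0 : F) • u)
    (y := s • v + (a * (1 - s)) • w + r • u) (by rw [hq]; ring)
    (by rw [hq]; linear_combination hrs) ?_
  rw [show (1 : F) • v + a • w + (0 : F) • u - (s • v + (a * (1 - s)) • w + r • u) =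
    (1 - s) • v + (a * s) • w + (-r) • u by module, hq]
  linear_combination hrs
end

section
/- Let F be a field, V a finite-dimensional F-vector space of dimension at least 2, q : V → F a non-degenerate quadratic form, and a ∈ F. If x₀, x₁, x₂, x₃ ∈ V satisfy q(x₁ − x₀) = a, q(x₂ − x₁) = a, q(x₃ − x₂) = a and q(x₀ − x₃) = a (i.e. (x₀, x₁, x₂, x₃, x₀) traverses a closed walk of length 4 in G_{q,a}), then the diagonals are orthogonal: b_q(x₂ − x₀, x₃ − x₁) = 0. -/
open QuadraticMap Module

/-- In a closed walk of length 4 in the representation graph `G_{q,a}` of a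
non-degenerate quadratic form `q` on a space of dimension at least 2, the diagonals are
orthogonal with respect to the polar form. -/
theorem stmt_19 {F V : Type*} [Field F] [AddCommGroup V] [Module F V] [FiniteDimensional F V]
    (q : QuadraticForm F V) (hdim : 2 ≤ Module.finrank F V)
    (hnd : ∀ x : V, (∀ y : V, polar (⇑q) x y = 0) → x = 0)
    (a : F) (x₀ x₁ x₂ x₃ : V)
    (h01 : q (x₁ - x₀) = a) (h12 : q (x₂ - x₁) = a)
    (h23 : q (x₃ - x₂) = a) (h30 : q (x₀ - x₃) = a) :
    polar (⇑q) (x₂ - x₀) (x₃ - x₁) = 0 := by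
  have key : ∀ u v : V, q (u - v) = q u + q v - polar (⇑q) u v := by
    intro u v
    rw [sub_eq_add_neg, QuadraticMap.map_add (⇑q), QuadraticMap.map_neg, polar_neg_right]
    ring
  rw [key] at h01 h12 h23 h30
  rw [polar_sub_left, polar_sub_right, polar_sub_right,
    polar_comm (⇑q) x₂ x₃, polar_comm (⇑q) x₀ x₁]
  linear_combination h12 + h30 - h01 - h23
end
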